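/- arXiv:1508.00489 — 7 statements merged into one kernel-verified Lean document; each statement's English description precedes it below -/
import Mathlib

section
/- Let {b_0, b_1, …, b_l} and {c_0, c_1, …, c_l} be two finite sequences of non-negative real numbers of length l+1 ≥ 2. Suppose that for every index i with 0 ≤ i ≤ l−1 the following implication is true: if c_i < 1 then b_{i+1} ≤ b_i/(1−c_i) and c_{i+1} ≤ 2·c_i²·[b_i/(1−c_i)]². Also suppose that b_0 ≥ 1 and that ε := 6·b_0²·c_0 ≤ 2/3. Then for every index i = 0, 1, …, l one has c_i ≤ ε^(2^i)/(6·b_0²) and b_i/(1−c_i) ≤ √3·b_0. -/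
/-!
Put `ε = 6 b₀² c₀`. As long as `c_j ≤ ε^(2^j) / (6 b₀²)` for all `j ≤ i`, the first recursive
inequality telescopes to `b_i / (1 - c_i) ≤ b₀ / ∏_{j ≤ i} (1 - c_j) ≤ b₀ / (1 - ∑_{j ≤ i} c_j)`,
and since `ε ≤ 2/3` the doubly exponentially small `c_j` sum to at most `1/3`; hence
`b_i / (1 - c_i) ≤ 3 b₀ / 2 ≤ √3 b₀`. Feeding this into the second recursive inequality gives
`c_{i+1} ≤ 2 (ε^(2^i) / (6 b₀²))² (3 b₀ / 2)² = (3/4) ε^(2^(i+1)) / (6 b₀²)`, which closes the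
induction.
-/

open Finset

theorem Finset.one_sub_sum_le_prod_one_sub {ι : Type*} [DecidableEq ι] (s : Finset ι)
    {c : ι → ℝ} (hc₀ : ∀ j ∈ s, 0 ≤ c j) (hc₁ : ∀ j ∈ s, c j ≤ 1) :
    1 - ∑ j ∈ s, c j ≤ ∏ j ∈ s, (1 - c j) := by
  induction s using Finset.induction_on with
  | empty => simp
  | insert a s ha ih =>
    rw [sum_insert ha, prod_insert ha]
    have hs := ih (fun j hj ↦ hc₀ j (mem_insert_of_mem hj)) (fun j hj ↦ hc₁ j (mem_insert_of_mem hj))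
    have hsum : 0 ≤ ∑ j ∈ s, c j := sum_nonneg fun j hj ↦ hc₀ j (mem_insert_of_mem hj)
    have ha₀ := hc₀ a (mem_insert_self a s)
    have ha₁ := hc₁ a (mem_insert_self a s)
    nlinarith [mul_le_mul_of_nonneg_left hs (sub_nonneg.2 ha₁)]

theorem pow_two_pow_le_pow_succ {x : ℝ} (hx₀ : 0 ≤ x) (hx₁ : x ≤ 1) (j : ℕ) :
    x ^ 2 ^ j ≤ x ^ (j + 1) :=
  pow_le_pow_of_le_one hx₀ hx₁ Nat.lt_two_pow_self

theorem sum_pow_two_pow_le {x : ℝ} (hx₀ : 0 ≤ x) (hx₁ : x < 1) (n : ℕ) :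
    ∑ j ∈ range n, x ^ 2 ^ j ≤ x / (1 - x) :=
  calc ∑ j ∈ range n, x ^ 2 ^ j
      ≤ ∑ j ∈ range n, x ^ (j + 1) := sum_le_sum fun j _ ↦ pow_two_pow_le_pow_succ hx₀ hx₁.le j
    _ = x * ∑ j ∈ Ico 0 n, x ^ j := by simp only [mul_sum, pow_succ', range_eq_Ico]
    _ ≤ x * (x ^ 0 / (1 - x)) := by gcongr; exact geom_sum_Ico_le_of_lt_one hx₀ hx₁
    _ = x / (1 - x) := by ring

theorem le_div_prod_one_sub_of_le_div_one_sub {b c : ℕ → ℝ} {n : ℕ} (hc : ∀ j < n, c j < 1)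
    (hrec : ∀ j < n, b (j + 1) ≤ b j / (1 - c j)) :
    b n ≤ b 0 / ∏ j ∈ range n, (1 - c j) := by
  induction n with
  | zero => simp
  | succ n ih =>
    have ih := ih (fun j hj ↦ hc j (by omega)) (fun j hj ↦ hrec j (by omega))
    calc b (n + 1) ≤ b n / (1 - c n) := hrec n n.lt_succ_self
      _ ≤ b 0 / (∏ j ∈ range n, (1 - c j)) / (1 - c n) :=
        div_le_div_of_nonneg_right ih (sub_nonneg.2 (hc n n.lt_succ_self).le)
      _ = b 0 / ∏ j ∈ range (n + 1), (1 - c j) := by rw [div_div, prod_range_succ]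

section RecursiveInequality

variable {b c : ℕ → ℝ} {B ε : ℝ}

theorem lt_one_of_le_pow_two_pow (hB : 1 ≤ B) (hε₀ : 0 ≤ ε) (hε : ε ≤ 1) {j : ℕ}
    (hcj : c j ≤ ε ^ 2 ^ j / (6 * B ^ 2)) : c j < 1 :=
  calc c j ≤ ε ^ 2 ^ j / (6 * B ^ 2) := hcj
    _ ≤ 1 / 6 := div_le_div₀ zero_le_one (pow_le_one₀ hε₀ hε) (by norm_num) (by nlinarith)
    _ < 1 := by norm_num

theorem sum_le_one_third_of_le_pow_two_pow (hB : 1 ≤ B) (hε₀ : 0 ≤ ε) (hε : ε ≤ 2 / 3) {n : ℕ}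
    (hcn : ∀ j < n, c j ≤ ε ^ 2 ^ j / (6 * B ^ 2)) :
    ∑ j ∈ range n, c j ≤ 1 / 3 := by
  have hgeom : ∑ j ∈ range n, ε ^ 2 ^ j ≤ 2 :=
    (sum_pow_two_pow_le hε₀ (by linarith) n).trans <| by
      rw [div_le_iff₀ (by linarith)]; linarith
  calc ∑ j ∈ range n, c j ≤ ∑ j ∈ range n, ε ^ 2 ^ j / (6 * B ^ 2) :=
        sum_le_sum fun j hj ↦ hcn j (mem_range.1 hj)
    _ = (∑ j ∈ range n, ε ^ 2 ^ j) / (6 * B ^ 2) := by rw [sum_div]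
    _ ≤ 2 / 6 := div_le_div₀ (by norm_num) hgeom (by norm_num) (by nlinarith)
    _ = 1 / 3 := by norm_num

theorem div_one_sub_le_of_le_pow_two_pow (hb₀ : 1 ≤ b 0) (hε₀ : 0 ≤ ε) (hε : ε ≤ 2 / 3)
    {i : ℕ} (hc₀ : ∀ j ≤ i, 0 ≤ c j) (hci : ∀ j ≤ i, c j ≤ ε ^ 2 ^ j / (6 * b 0 ^ 2))
    (hrec : ∀ j < i, b (j + 1) ≤ b j / (1 - c j)) :
    b i / (1 - c i) ≤ 3 / 2 * b 0 := by
  have hS := sum_le_one_third_of_le_pow_two_pow hb₀ hε₀ hε (n := i + 1)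
    fun j hj ↦ hci j (Nat.lt_succ_iff.1 hj)
  have hc₁ : ∀ j ≤ i, c j < 1 := fun j hj ↦
    lt_one_of_le_pow_two_pow hb₀ hε₀ (by linarith) (hci j hj)
  have hprod : 2 / 3 ≤ ∏ j ∈ range (i + 1), (1 - c j) :=
    (by linarith : (2 : ℝ) / 3 ≤ 1 - ∑ j ∈ range (i + 1), c j).trans <|
      one_sub_sum_le_prod_one_sub _ (fun j hj ↦ hc₀ j (Nat.lt_succ_iff.1 (mem_range.1 hj)))
        fun j hj ↦ (hc₁ j (Nat.lt_succ_iff.1 (mem_range.1 hj))).le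
  calc b i / (1 - c i) ≤ b 0 / (∏ j ∈ range i, (1 - c j)) / (1 - c i) :=
        div_le_div_of_nonneg_right
          (le_div_prod_one_sub_of_le_div_one_sub (fun j hj ↦ hc₁ j hj.le) hrec)
          (sub_nonneg.2 (hc₁ i le_rfl).le)
    _ = b 0 / ∏ j ∈ range (i + 1), (1 - c j) := by rw [div_div, prod_range_succ]
    _ ≤ b 0 / (2 / 3) := div_le_div_of_nonneg_left (by linarith) (by norm_num) hprod
    _ = 3 / 2 * b 0 := by ring

theorem le_pow_two_pow_succ_of_le_pow_two_pow (hB : 1 ≤ B) (hε₀ : 0 ≤ ε) {x y q : ℝ} {i : ℕ}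
    (hx₀ : 0 ≤ x) (hx : x ≤ ε ^ 2 ^ i / (6 * B ^ 2)) (hq₀ : 0 ≤ q) (hq : q ≤ 3 / 2 * B)
    (hy : y ≤ 2 * x ^ 2 * q ^ 2) :
    y ≤ ε ^ 2 ^ (i + 1) / (6 * B ^ 2) := by
  have hB₀ : 0 < B := by linarith
  calc y ≤ 2 * x ^ 2 * q ^ 2 := hy
    _ ≤ 2 * (ε ^ 2 ^ i / (6 * B ^ 2)) ^ 2 * (3 / 2 * B) ^ 2 := by gcongr
    _ = 3 / 4 * (ε ^ 2 ^ (i + 1) / (6 * B ^ 2)) := by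
      field_simp
      ring
    _ ≤ ε ^ 2 ^ (i + 1) / (6 * B ^ 2) := by
      have : 0 ≤ ε ^ 2 ^ (i + 1) / (6 * B ^ 2) := by positivity
      linarith

end RecursiveInequality

theorem finite_recursive_inequality_lemma_general
    (l : ℕ) (b c : ℕ → ℝ)
    (hb : ∀ i ≤ l, 0 ≤ b i) (hc : ∀ i ≤ l, 0 ≤ c i)
    (hrec : ∀ i < l, c i < 1 →
      b (i + 1) ≤ b i / (1 - c i) ∧
      c (i + 1) ≤ 2 * c i ^ 2 * (b i / (1 - c i)) ^ 2)
    (hb0 : 1 ≤ b 0)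
    (hε : 6 * b 0 ^ 2 * c 0 ≤ 2 / 3) :
    ∀ i ≤ l,
      c i ≤ (6 * b 0 ^ 2 * c 0) ^ (2 ^ i) / (6 * b 0 ^ 2) ∧
      b i / (1 - c i) ≤ Real.sqrt 3 * b 0 := by
  set ε := 6 * b 0 ^ 2 * c 0
  have hε₀ : 0 ≤ ε := mul_nonneg (by positivity) (hc 0 l.zero_le)
  have hc₁ : ∀ j, c j ≤ ε ^ 2 ^ j / (6 * b 0 ^ 2) → c j < 1 := fun j ↦
    lt_one_of_le_pow_two_pow hb0 hε₀ (by linarith)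
  have hq : ∀ i ≤ l, (∀ j ≤ i, c j ≤ ε ^ 2 ^ j / (6 * b 0 ^ 2)) →
      b i / (1 - c i) ≤ 3 / 2 * b 0 := fun i hi hci ↦
    div_one_sub_le_of_le_pow_two_pow hb0 hε₀ hε (fun j hj ↦ hc j (hj.trans hi)) hci
      fun j hj ↦ (hrec j (by omega) (hc₁ j (hci j hj.le))).1
  have hcl : ∀ i ≤ l, ∀ j ≤ i, c j ≤ ε ^ 2 ^ j / (6 * b 0 ^ 2) := by
    intro i
    induction i with
    | zero =>
      intro _ j hj
      obtain rfl := Nat.le_zero.1 hj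
      rw [pow_zero, pow_one, mul_div_cancel_left₀ _ (by positivity)]
    | succ i ih =>
      intro hi j hj
      obtain hj | rfl := hj.lt_or_eq
      · exact ih (by omega) j (by omega)
      have hci := ih (by omega)
      have hci₁ := hc₁ i (hci i le_rfl)
      exact le_pow_two_pow_succ_of_le_pow_two_pow hb0 hε₀ (hc i (by omega)) (hci i le_rfl)
        (div_nonneg (hb i (by omega)) (sub_nonneg.2 hci₁.le)) (hq i (by omega) hci)
        (hrec i (by omega) hci₁).2
  intro i hi
  refine ⟨hcl i hi i le_rfl, (hq i hi (hcl i hi)).trans ?_⟩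
  have : (3 / 2 : ℝ) ≤ Real.sqrt 3 := Real.le_sqrt_of_sq_le (by norm_num)
  exact mul_le_mul_of_nonneg_right this (by linarith)

/-- Lemma 4 of the paper: the recursive-inequality lemma for finite sequences. -/
theorem finite_recursive_inequality_lemma
    (l : ℕ) (hl : 1 ≤ l) (b c : ℕ → ℝ)
    (hb : ∀ i ≤ l, 0 ≤ b i) (hc : ∀ i ≤ l, 0 ≤ c i)
    (hrec : ∀ i < l, c i < 1 →
      b (i + 1) ≤ b i / (1 - c i) ∧
      c (i + 1) ≤ 2 * c i ^ 2 * (b i / (1 - c i)) ^ 2)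
    (hb0 : 1 ≤ b 0)
    (hε : 6 * b 0 ^ 2 * c 0 ≤ 2 / 3) :
    ∀ i ≤ l,
      c i ≤ (6 * b 0 ^ 2 * c 0) ^ (2 ^ i) / (6 * b 0 ^ 2) ∧
      b i / (1 - c i) ≤ Real.sqrt 3 * b 0 :=
  finite_recursive_inequality_lemma_general l b c hb hc hrec hb0 hε
end

section
/- Let G be a group, E a real Banach space, and λ : G → L(E,E) a unital pseudo-representation with c(λ) < 1. Then for every g ∈ G the operator λ(g) is invertible, i.e. a continuous linear automorphism of E; moreover, if b(λ) is finite, then ‖λ(g)⁻¹‖ ≤ b(λ)/(1−c(λ)) for every g ∈ G. -/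
/-- Every unital pseudo-representation of a group on a Banach space whose
multiplicativity defect `c(λ)` is `< 1` takes values in invertible operators,
with the inverses bounded in norm by `b(λ)/(1 - c(λ))` whenever `b(λ)` is finite. -/
theorem unital_pseudoRep_invertible
    {G : Type*} [Group G] {E : Type*} [NormedAddCommGroup E] [NormedSpace ℝ E]
    [CompleteSpace E]
    (lam : G → E →L[ℝ] E)
    (hunital : lam 1 = ContinuousLinearMap.id ℝ E)
    (C : ℝ) (hC : ∀ g' g : G, ‖lam (g' * g) - (lam g').comp (lam g)‖ ≤ C)
    (hC1 : C < 1) :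
    ∀ g : G, ∃ u : E ≃L[ℝ] E, lam g = u ∧
      ∀ B : ℝ, (∀ h : G, ‖lam h‖ ≤ B) →
        ‖(u.symm : E →L[ℝ] E)‖ ≤ B / (1 - C) := by
  have hCpos : (0 : ℝ) < 1 - C := by linarith
  -- key lemma: anything `C`-close to `1` is invertible with controlled inverse norm
  have key : ∀ x : E →L[ℝ] E, ‖(1 : E →L[ℝ] E) - x‖ ≤ C →
      ∃ y : E →L[ℝ] E, y * x = 1 ∧ x * y = 1 ∧ ‖y‖ ≤ (1 - C)⁻¹ := by
    intro x hx
    have hx1 : ‖(1 : E →L[ℝ] E) - x‖ < 1 := lt_of_le_of_lt hx hC1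
    set v : (E →L[ℝ] E)ˣ := Units.oneSub _ hx1 with hv
    have hvval : (v : E →L[ℝ] E) = x := by simp [hv, Units.oneSub]
    refine ⟨(↑v⁻¹ : E →L[ℝ] E), by rw [← hvval]; exact v.inv_mul,
      by rw [← hvval]; exact v.mul_inv, ?_⟩
    have hvt : (↑v⁻¹ : E →L[ℝ] E) = ∑' n : ℕ, ((1 : E →L[ℝ] E) - x) ^ n := by
      simp [hv, Units.oneSub]
    rw [hvt]
    calc ‖∑' n : ℕ, ((1 : E →L[ℝ] E) - x) ^ n‖
        ≤ ‖(1 : E →L[ℝ] E)‖ - 1 + (1 - ‖(1 : E →L[ℝ] E) - x‖)⁻¹ :=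
          tsum_geometric_le_of_norm_lt_one _ hx1
      _ ≤ (1 - ‖(1 : E →L[ℝ] E) - x‖)⁻¹ := by
          have h1 : ‖(1 : E →L[ℝ] E)‖ ≤ 1 := ContinuousLinearMap.norm_id_le
          linarith
      _ ≤ (1 - C)⁻¹ := by
          apply inv_anti₀ hCpos
          have := norm_nonneg ((1 : E →L[ℝ] E) - x)
          linarith
  intro g
  have hone : lam (1 : G) = (1 : E →L[ℝ] E) := hunital
  obtain ⟨vi, hvi1, hvi2, hvin⟩ := key ((lam g⁻¹) * (lam g)) (by
    have := hC g⁻¹ g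
    simpa [hone, inv_mul_cancel, ContinuousLinearMap.mul_def] using this)
  obtain ⟨wi, hwi1, hwi2, _⟩ := key ((lam g) * (lam g⁻¹)) (by
    have := hC g g⁻¹
    simpa [hone, mul_inv_cancel, ContinuousLinearMap.mul_def] using this)
  set a := lam g
  set b := lam g⁻¹
  set finv : E →L[ℝ] E := vi * b with hfinv
  have hleft : finv * a = 1 := by rw [hfinv, mul_assoc]; exact hvi1
  have hright : a * finv = 1 := by
    have h2 : a * (b * wi) = 1 := by rw [← mul_assoc]; exact hwi2
    have h3 : finv = b * wi := by
      calc finv = finv * (a * (b * wi)) := by rw [h2, mul_one]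
        _ = (finv * a) * (b * wi) := (mul_assoc finv a (b * wi)).symm
        _ = b * wi := by rw [hleft, one_mul]
    rw [h3, ← mul_assoc]
    exact hwi2
  refine ⟨ContinuousLinearEquiv.equivOfInverse a finv
      (fun x => by
        have := congrArg (fun f : E →L[ℝ] E => f x) hleft
        simpa using this)
      (fun x => by
        have := congrArg (fun f : E →L[ℝ] E => f x) hright
        simpa using this), rfl, ?_⟩
  intro B hB
  show ‖finv‖ ≤ B / (1 - C)
  have hBnn : 0 ≤ B := le_trans (norm_nonneg _) (hB 1)
  calc ‖finv‖ ≤ ‖vi‖ * ‖b‖ := norm_mul_le _ _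
    _ ≤ (1 - C)⁻¹ * B := by
        apply mul_le_mul hvin (hB g⁻¹) (norm_nonneg _)
        positivity
    _ = B / (1 - C) := by field_simp
end

section
/- Let G be a group, E a real Banach space, and λ : G → L(E,E) a unital pseudo-representation with b(λ) finite and c(λ) < 1. Then for all g, k ∈ G one has ‖λ(gk)∘λ(k)⁻¹‖ ≤ b(λ)/(1−c(λ)), where λ(k)⁻¹ denotes the inverse of the (invertible) operator λ(k). -/
/-!
Writing `δ(h, k) = λ(hk) - λ(h)λ(k)` for the defect, `λ(hk) y = δ(h, k) y + λ(h) (λ(k) y)` gives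
`‖λ(hk) y‖ ≤ c ‖y‖ + b ‖λ(k) y‖` for every `h`. Taking `h = k⁻¹` and using `λ(1) = id` shows that
`λ(k)` is bounded below, `(1 - c) ‖y‖ ≤ b ‖λ(k) y‖`; feeding this back in with `h = g` yields
`‖λ(gk) y‖ ≤ b / (1 - c) · ‖λ(k) y‖`, which is the claim for `y = λ(k)⁻¹ x`.
-/

section PseudoRepresentation

variable {G 𝕜 E : Type*} [NontriviallyNormedField 𝕜] [SeminormedAddCommGroup E]
  [NormedSpace 𝕜 E] {lam : G → E →L[𝕜] E} {B C : ℝ}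

theorem norm_apply_mul_le_of_defect_le [Mul G] (hB : ∀ h, ‖lam h‖ ≤ B)
    (hC : ∀ g' g, ‖lam (g' * g) - (lam g').comp (lam g)‖ ≤ C) (h k : G) (y : E) :
    ‖lam (h * k) y‖ ≤ C * ‖y‖ + B * ‖lam k y‖ := by
  have hsplit : lam (h * k) y = (lam (h * k) - (lam h).comp (lam k)) y + lam h (lam k y) := by
    simp
  rw [hsplit]
  refine (norm_add_le _ _).trans (add_le_add ?_ ?_)
  · exact (ContinuousLinearMap.le_opNorm _ y).trans
      (mul_le_mul_of_nonneg_right (hC h k) (norm_nonneg y))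
  · exact (ContinuousLinearMap.le_opNorm _ _).trans
      (mul_le_mul_of_nonneg_right (hB h) (norm_nonneg _))

variable [Group G]

theorem one_sub_mul_norm_le_mul_norm_apply (hunital : lam 1 = ContinuousLinearMap.id 𝕜 E)
    (hB : ∀ h, ‖lam h‖ ≤ B) (hC : ∀ g' g, ‖lam (g' * g) - (lam g').comp (lam g)‖ ≤ C)
    (k : G) (y : E) : (1 - C) * ‖y‖ ≤ B * ‖lam k y‖ := by
  have hinv := norm_apply_mul_le_of_defect_le hB hC k⁻¹ k y
  rw [inv_mul_cancel, hunital, ContinuousLinearMap.id_apply] at hinv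
  linarith

theorem norm_apply_mul_le_div_one_sub_mul_norm_apply
    (hunital : lam 1 = ContinuousLinearMap.id 𝕜 E) (hB : ∀ h, ‖lam h‖ ≤ B)
    (hC : ∀ g' g, ‖lam (g' * g) - (lam g').comp (lam g)‖ ≤ C) (hC1 : C < 1) (g k : G) (y : E) :
    ‖lam (g * k) y‖ ≤ B / (1 - C) * ‖lam k y‖ := by
  have h1C : 0 < 1 - C := by linarith
  have hC0 : 0 ≤ C := (norm_nonneg _).trans (hC 1 1)
  have hy : ‖y‖ ≤ B * ‖lam k y‖ / (1 - C) := by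
    rw [le_div_iff₀ h1C, mul_comm]
    exact one_sub_mul_norm_le_mul_norm_apply hunital hB hC k y
  calc ‖lam (g * k) y‖ ≤ C * ‖y‖ + B * ‖lam k y‖ := norm_apply_mul_le_of_defect_le hB hC g k y
    _ ≤ C * (B * ‖lam k y‖ / (1 - C)) + B * ‖lam k y‖ := by gcongr
    _ = B / (1 - C) * ‖lam k y‖ := by field_simp; ring

end PseudoRepresentation

theorem division_cocycle_bound_general
    {G : Type*} [Group G] {E : Type*} [NormedAddCommGroup E] [NormedSpace ℝ E]
    (lam : G → E →L[ℝ] E)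
    (hunital : lam 1 = ContinuousLinearMap.id ℝ E)
    (B : ℝ) (hB : ∀ h : G, ‖lam h‖ ≤ B)
    (C : ℝ) (hC : ∀ g' g : G, ‖lam (g' * g) - (lam g').comp (lam g)‖ ≤ C)
    (hC1 : C < 1) :
    ∀ g k : G, ∀ u : E ≃L[ℝ] E, lam k = u →
      ‖(lam (g * k)).comp (u.symm : E →L[ℝ] E)‖ ≤ B / (1 - C) := by
  intro g k u hu
  have hB0 : 0 ≤ B := (norm_nonneg _).trans (hB 1)
  have h1C : 0 < 1 - C := by linarith
  refine ContinuousLinearMap.opNorm_le_bound _ (div_nonneg hB0 h1C.le) fun x => ?_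
  have hx : lam k (u.symm x) = x := by rw [hu]; exact u.apply_symm_apply x
  have hbound := norm_apply_mul_le_div_one_sub_mul_norm_apply hunital hB hC hC1 g k (u.symm x)
  rwa [hx] at hbound

/-- The pointwise integrand estimate underlying the paper's inequality (5):
for a unital pseudo-representation with `b(λ)` finite and `c(λ) < 1`, the
"division cocycle" `λ(gk) ∘ λ(k)⁻¹` is bounded in norm by `b(λ)/(1 - c(λ))`. -/
theorem division_cocycle_bound
    {G : Type*} [Group G] {E : Type*} [NormedAddCommGroup E] [NormedSpace ℝ E]
    [CompleteSpace E]
    (lam : G → E →L[ℝ] E)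
    (hunital : lam 1 = ContinuousLinearMap.id ℝ E)
    (B : ℝ) (hB : ∀ h : G, ‖lam h‖ ≤ B)
    (C : ℝ) (hC : ∀ g' g : G, ‖lam (g' * g) - (lam g').comp (lam g)‖ ≤ C)
    (hC1 : C < 1) :
    ∀ g k : G, ∀ u : E ≃L[ℝ] E, lam k = u →
      ‖(lam (g * k)).comp (u.symm : E →L[ℝ] E)‖ ≤ B / (1 - C) :=
  division_cocycle_bound_general lam hunital B hB C hC hC1
end

section
/- Let G be a compact topological group with Haar probability measure ν, E a real Banach space, and λ : G → L(E,E) a continuous unital pseudo-representation with c(λ) < 1. Then the multiplicative average λ̄ is a unital pseudo-representation and satisfies ‖λ̄(g)‖ ≤ b(λ)/(1−c(λ)) for every g ∈ G; in particular b(λ̄) ≤ b(λ)/(1−c(λ)). -/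
open MeasureTheory

/-!
Since `λ(k)λ(k⁻¹)` and `λ(k⁻¹)λ(k)` lie within `c(λ) < 1` of `λ(1) = 1`, every `λ(k)` is invertible
by the Neumann series. The identity `λ(gk)λ(k)⁻¹ = λ(g) + (λ(gk) - λ(g)λ(k))λ(k)⁻¹` gives
`‖λ(gk)λ(k)⁻¹‖ ≤ b + c‖λ(k)⁻¹‖`; at `g = k⁻¹` the left side is `‖λ(k)⁻¹‖`, so
`‖λ(k)⁻¹‖ ≤ b/(1 - c)`, and then `‖λ(gk)λ(k)⁻¹‖ ≤ b + cb/(1 - c) = b/(1 - c)`.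
Averaging over the probability measure `ν` preserves both this bound and the value `1` at `g = 1`.
-/

/-- The multiplicative average of a pseudo-representation `λ` of a compact group `G`
on a Banach space `E`, relative to a (Haar probability) measure `ν`:
`λ̄(g) := ∫ λ(gk) ∘ λ(k)⁻¹ dν(k)` (Bochner integral; `λ(k)⁻¹` is
`ContinuousLinearMap.inverse`, which is the genuine inverse whenever `λ(k)` is
invertible). -/
noncomputable def mulAvg {G : Type*} [Group G] [TopologicalSpace G]
    [MeasurableSpace G] {E : Type*} [NormedAddCommGroup E] [NormedSpace ℝ E]
    (ν : Measure G) (lam : G → E →L[ℝ] E) : G → E →L[ℝ] E :=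
  fun g => ∫ k, (lam (g * k)).comp (lam k).inverse ∂ν

lemma isUnit_of_isUnit_mul_of_isUnit_mul {M : Type*} [Monoid M] {a b : M}
    (hab : IsUnit (a * b)) (hba : IsUnit (b * a)) : IsUnit a := by
  obtain ⟨u, hu⟩ := hab
  obtain ⟨v, hv⟩ := hba
  have hright : a * (b * ↑u⁻¹) = 1 := by rw [← mul_assoc, ← hu, Units.mul_inv]
  have hleft : (↑v⁻¹ * b) * a = 1 := by rw [mul_assoc, ← hv, Units.inv_mul]
  rw [left_inv_eq_right_inv hleft hright] at hleft
  exact ⟨⟨a, b * ↑u⁻¹, hright, hleft⟩, rfl⟩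

lemma isUnit_of_norm_one_sub_lt_one {R : Type*} [NormedRing R] [HasSummableGeomSeries R] {x : R}
    (hx : ‖1 - x‖ < 1) : IsUnit x := by
  simpa only [Units.val_oneSub, sub_sub_cancel] using (Units.oneSub (1 - x) hx).isUnit

namespace PseudoRep

variable {G : Type*} [Group G] {R : Type*} [NormedRing R] {lam : G → R} {B C : ℝ}

lemma isUnit [HasSummableGeomSeries R] (hunital : lam 1 = 1)
    (hC : ∀ g' g, ‖lam (g' * g) - lam g' * lam g‖ ≤ C) (hC1 : C < 1) (k : G) : IsUnit (lam k) := by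
  have hprod : ∀ a b : G, a * b = 1 → IsUnit (lam a * lam b) := fun a b hab ↦
    isUnit_of_norm_one_sub_lt_one <| by
      rw [← hunital, ← hab]
      exact (hC a b).trans_lt hC1
  exact isUnit_of_isUnit_mul_of_isUnit_mul (hprod k k⁻¹ (mul_inv_cancel k))
    (hprod k⁻¹ k (inv_mul_cancel k))

lemma norm_mul_inverse_le (hB : ∀ h, ‖lam h‖ ≤ B)
    (hC : ∀ g' g, ‖lam (g' * g) - lam g' * lam g‖ ≤ C) {k : G} (hk : IsUnit (lam k)) (g : G) :
    ‖lam (g * k) * Ring.inverse (lam k)‖ ≤ B + C * ‖Ring.inverse (lam k)‖ := by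
  set I := Ring.inverse (lam k)
  have hdecomp : lam (g * k) * I = lam g + (lam (g * k) - lam g * lam k) * I := by
    rw [sub_mul, mul_assoc, Ring.mul_inverse_cancel _ hk, mul_one, add_sub_cancel]
  calc ‖lam (g * k) * I‖
      ≤ ‖lam g‖ + ‖lam (g * k) - lam g * lam k‖ * ‖I‖ := by
        rw [hdecomp]; exact (norm_add_le _ _).trans (by gcongr; exact norm_mul_le _ _)
    _ ≤ B + C * ‖I‖ := by gcongr <;> simp only [hB, hC]

lemma norm_inverse_le (hunital : lam 1 = 1) (hB : ∀ h, ‖lam h‖ ≤ B)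
    (hC : ∀ g' g, ‖lam (g' * g) - lam g' * lam g‖ ≤ C) (hC1 : C < 1) {k : G}
    (hk : IsUnit (lam k)) : ‖Ring.inverse (lam k)‖ ≤ B / (1 - C) := by
  have h := norm_mul_inverse_le hB hC hk k⁻¹
  rw [inv_mul_cancel, hunital, one_mul] at h
  rw [le_div_iff₀ (by linarith)]
  linarith

lemma norm_mul_inverse_le_div (hunital : lam 1 = 1) (hB : ∀ h, ‖lam h‖ ≤ B)
    (hC : ∀ g' g, ‖lam (g' * g) - lam g' * lam g‖ ≤ C) (hC1 : C < 1) {k : G}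
    (hk : IsUnit (lam k)) (g : G) : ‖lam (g * k) * Ring.inverse (lam k)‖ ≤ B / (1 - C) := by
  have hC0 : 0 ≤ C := (norm_nonneg _).trans (hC 1 1)
  calc ‖lam (g * k) * Ring.inverse (lam k)‖
      ≤ B + C * (B / (1 - C)) := by
        grw [norm_mul_inverse_le hB hC hk g, norm_inverse_le hunital hB hC hC1 hk]
    _ = B / (1 - C) := by field_simp [(by linarith : (1 - C) ≠ 0)]; ring

end PseudoRep

lemma mulAvg_eq_integral_mul_ringInverse {G : Type*} [Group G] [TopologicalSpace G]
    [MeasurableSpace G] {E : Type*} [NormedAddCommGroup E] [NormedSpace ℝ E]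
    (ν : Measure G) (lam : G → E →L[ℝ] E) (g : G) :
    mulAvg ν lam g = ∫ k, lam (g * k) * Ring.inverse (lam k) ∂ν := by
  simp only [mulAvg, ContinuousLinearMap.ringInverse_eq_inverse]
  rfl

theorem mulAvg_unital_and_norm_bound_general
    {G : Type*} [Group G] [TopologicalSpace G]
    [MeasurableSpace G]
    (ν : Measure G) [IsProbabilityMeasure ν]
    {E : Type*} [NormedAddCommGroup E] [NormedSpace ℝ E] [CompleteSpace E]
    (lam : G → E →L[ℝ] E)
    (hunital : lam 1 = ContinuousLinearMap.id ℝ E)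
    (B : ℝ) (hB : ∀ h : G, ‖lam h‖ ≤ B)
    (C : ℝ) (hC : ∀ g' g : G, ‖lam (g' * g) - (lam g').comp (lam g)‖ ≤ C)
    (hC1 : C < 1) :
    mulAvg ν lam 1 = ContinuousLinearMap.id ℝ E ∧
    ∀ g : G, ‖mulAvg ν lam g‖ ≤ B / (1 - C) := by
  have hunit := PseudoRep.isUnit hunital hC hC1
  refine ⟨?_, fun g ↦ ?_⟩
  · rw [mulAvg_eq_integral_mul_ringInverse]
    refine integral_eq_const (.of_forall fun k ↦ ?_)
    rw [one_mul]
    exact Ring.mul_inverse_cancel _ (hunit k)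
  · rw [mulAvg_eq_integral_mul_ringInverse]
    simpa using norm_integral_le_of_norm_le_const (μ := ν) (.of_forall fun k ↦
      PseudoRep.norm_mul_inverse_le_div hunital hB hC hC1 (hunit k) g)

/-- The paper's estimate (5): the multiplicative average of a continuous unital
pseudo-representation with `c(λ) < 1` is a unital pseudo-representation with
`b(λ̄) ≤ b(λ)/(1 - c(λ))`. -/
theorem mulAvg_unital_and_norm_bound
    {G : Type*} [Group G] [TopologicalSpace G] [IsTopologicalGroup G]
    [CompactSpace G] [MeasurableSpace G] [BorelSpace G]
    (ν : Measure G) [ν.IsHaarMeasure] [IsProbabilityMeasure ν]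
    {E : Type*} [NormedAddCommGroup E] [NormedSpace ℝ E] [CompleteSpace E]
    (lam : G → E →L[ℝ] E) (hcont : Continuous lam)
    (hunital : lam 1 = ContinuousLinearMap.id ℝ E)
    (B : ℝ) (hB : ∀ h : G, ‖lam h‖ ≤ B)
    (C : ℝ) (hC : ∀ g' g : G, ‖lam (g' * g) - (lam g').comp (lam g)‖ ≤ C)
    (hC1 : C < 1) :
    mulAvg ν lam 1 = ContinuousLinearMap.id ℝ E ∧
    ∀ g : G, ‖mulAvg ν lam g‖ ≤ B / (1 - C) :=
  mulAvg_unital_and_norm_bound_general ν lam hunital B hB C hC hC1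
end

section
/- Let G be a compact topological group with Haar probability measure ν, E a real Banach space, and λ : G → L(E,E) a continuous unital pseudo-representation with c(λ) < 1. Then for every g ∈ G one has ‖λ̄(g) − λ(g)‖ ≤ c(λ)·b(λ)/(1−c(λ)). -/
open MeasureTheory

-- aux: norm of inverse of a near-one unit
lemma aux_inv_norm {R : Type*} [NormedRing R] [CompleteSpace R]
    (h1 : ‖(1 : R)‖ ≤ 1) (u : Rˣ) {C : ℝ} (hu : ‖1 - (u : R)‖ ≤ C) (hC1 : C < 1) :
    ‖((u⁻¹ : Rˣ) : R)‖ ≤ (1 - C)⁻¹ := by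
  have ht : ‖1 - (u : R)‖ < 1 := lt_of_le_of_lt hu hC1
  have : ((u⁻¹ : Rˣ) : R) = Ring.inverse (u : R) := (Ring.inverse_unit u).symm
  rw [this]
  have h2 : (u : R) = 1 - (1 - (u : R)) := by rw [sub_sub_cancel]
  rw [h2, ← geom_series_eq_inverse _ ht]
  have := tsum_geometric_le_of_norm_lt_one (1 - (u : R)) ht
  have h3 : (1 - ‖1 - (u : R)‖)⁻¹ ≤ (1 - C)⁻¹ := by
    apply inv_anti₀ (by linarith) (by linarith)
  linarith

/-- The proximity estimate: `‖λ̄(g) − λ(g)‖ ≤ c(λ)·b(λ)/(1 − c(λ))`, the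
Cauchy-sequence ingredient in the paper's fast convergence theorems. -/
theorem mulAvg_proximity_bound
    {G : Type*} [Group G] [TopologicalSpace G] [IsTopologicalGroup G]
    [CompactSpace G] [MeasurableSpace G] [BorelSpace G]
    (ν : Measure G) [ν.IsHaarMeasure] [IsProbabilityMeasure ν]
    {E : Type*} [NormedAddCommGroup E] [NormedSpace ℝ E] [CompleteSpace E]
    (lam : G → E →L[ℝ] E) (hcont : Continuous lam)
    (hunital : lam 1 = ContinuousLinearMap.id ℝ E)
    (B : ℝ) (hB : ∀ h : G, ‖lam h‖ ≤ B)
    (C : ℝ) (hC : ∀ g' g : G, ‖lam (g' * g) - (lam g').comp (lam g)‖ ≤ C)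
    (hC1 : C < 1) :
    ∀ g : G, ‖mulAvg ν lam g - lam g‖ ≤ C * B / (1 - C) := by
  intro g
  have hone : (1 : E →L[ℝ] E) = ContinuousLinearMap.id ℝ E := rfl
  have hC0 : 0 ≤ C := le_trans (norm_nonneg _) (hC 1 1)
  have hB0 : 0 ≤ B := le_trans (norm_nonneg _) (hB 1)
  have hnorm1 : ‖(1 : E →L[ℝ] E)‖ ≤ 1 := by
    rw [hone]; exact ContinuousLinearMap.norm_id_le
  -- for each k, lam k is a unit with controlled inverse
  have key : ∀ k : G, ∃ w : (E →L[ℝ] E)ˣ, (w : E →L[ℝ] E) = lam k ∧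
      ‖((w⁻¹ : _) : E →L[ℝ] E)‖ ≤ B * (1 - C)⁻¹ := by
    intro k
    set a := lam k with ha
    set b := lam k⁻¹ with hb
    have hab : ‖1 - a * b‖ ≤ C := by
      have := hC k k⁻¹
      rwa [mul_inv_cancel, hunital, ← hone] at this
    have hba : ‖1 - b * a‖ ≤ C := by
      have := hC k⁻¹ k
      rwa [inv_mul_cancel, hunital, ← hone] at this
    set u : (E →L[ℝ] E)ˣ := Units.oneSub (1 - b * a) (lt_of_le_of_lt hba hC1) with hu
    set v : (E →L[ℝ] E)ˣ := Units.oneSub (1 - a * b) (lt_of_le_of_lt hab hC1) with hv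
    have huval : (u : E →L[ℝ] E) = b * a := by simp [hu, Units.oneSub]
    have hvval : (v : E →L[ℝ] E) = a * b := by simp [hv, Units.oneSub]
    set r : E →L[ℝ] E := b * ((v⁻¹ : _) : E →L[ℝ] E) with hr
    have har : a * r = 1 := by
      rw [hr, ← mul_assoc, ← hvval, Units.mul_inv]
    set l : E →L[ℝ] E := ((u⁻¹ : _) : E →L[ℝ] E) * b with hl
    have hla : l * a = 1 := by
      rw [hl, mul_assoc, ← huval, Units.inv_mul]
    have hlr : l = r := by
      rw [← one_mul r, ← hla, mul_assoc, har, mul_one]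
    refine ⟨⟨a, r, har, by rw [← hlr, hla]⟩, rfl, ?_⟩
    have hv1 : ‖1 - (v : E →L[ℝ] E)‖ ≤ C := by rwa [hvval]
    have hinv := aux_inv_norm hnorm1 v hv1 hC1
    calc ‖r‖ ≤ ‖b‖ * ‖((v⁻¹ : _) : E →L[ℝ] E)‖ := norm_mul_le _ _
      _ ≤ B * (1 - C)⁻¹ := mul_le_mul (hB _) hinv (norm_nonneg _) hB0
  -- rewrite the integrand
  have hinv_eq : ∀ k : G, (lam k).inverse = Ring.inverse (lam k) := by
    intro k
    rw [ContinuousLinearMap.ringInverse_eq_inverse]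
  -- pointwise bound
  have hpt : ∀ k : G, ‖(lam (g * k)).comp ((lam k).inverse) - lam g‖ ≤ C * B / (1 - C) := by
    intro k
    obtain ⟨w, hw, hwinv⟩ := key k
    have hinvk : (lam k).inverse = ((w⁻¹ : _) : E →L[ℝ] E) := by
      rw [hinv_eq k, ← hw, Ring.inverse_unit]
    have hsplit : (lam (g * k)).comp ((lam k).inverse) - lam g
        = (lam (g * k) - (lam g).comp (lam k)) * ((w⁻¹ : _) : E →L[ℝ] E) := by
      rw [hinvk]
      have : (lam g) = ((lam g) * lam k) * ((w⁻¹ : _) : E →L[ℝ] E) := by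
        rw [mul_assoc, ← hw, Units.mul_inv, mul_one]
      calc (lam (g * k)) * ((w⁻¹ : _) : E →L[ℝ] E) - lam g
          = (lam (g * k)) * ((w⁻¹ : _) : E →L[ℝ] E)
            - ((lam g) * lam k) * ((w⁻¹ : _) : E →L[ℝ] E) := by rw [← this]
        _ = (lam (g * k) - (lam g).comp (lam k)) * ((w⁻¹ : _) : E →L[ℝ] E) := by
            rw [sub_mul]; rfl
    rw [hsplit]
    calc ‖(lam (g * k) - (lam g).comp (lam k)) * ((w⁻¹ : _) : E →L[ℝ] E)‖
        ≤ ‖lam (g * k) - (lam g).comp (lam k)‖ * ‖((w⁻¹ : _) : E →L[ℝ] E)‖ := norm_mul_le _ _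
      _ ≤ C * (B * (1 - C)⁻¹) := mul_le_mul (hC g k) hwinv (norm_nonneg _) hC0
      _ = C * B / (1 - C) := by rw [div_eq_mul_inv, mul_assoc]
  -- integrability
  have hcont2 : Continuous fun k : G => (lam (g * k)).comp ((lam k).inverse) := by
    have h1 : Continuous fun k : G => lam (g * k) := hcont.comp (continuous_mul_left g)
    have h2 : Continuous fun k : G => (lam k).inverse := by
      rw [continuous_iff_continuousAt]
      intro k
      obtain ⟨w, hw, -⟩ := key k
      have : ContinuousAt Ring.inverse (lam k) := by
        rw [← hw]; exact NormedRing.inverse_continuousAt w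
      have hca : ContinuousAt (fun k : G => Ring.inverse (lam k)) k :=
        this.comp hcont.continuousAt
      have : (fun k : G => (lam k).inverse) = fun k : G => Ring.inverse (lam k) := by
        funext k; exact hinv_eq k
      rw [this]; exact hca
    exact h1.mul h2
  have hint : Integrable (fun k : G => (lam (g * k)).comp ((lam k).inverse)) ν :=
    hcont2.integrable_of_hasCompactSupport ((isClosed_tsupport _).isCompact)
  -- assemble
  have hsub : mulAvg ν lam g - lam g
      = ∫ k, ((lam (g * k)).comp ((lam k).inverse) - lam g) ∂ν := by
    rw [integral_sub hint (integrable_const _), integral_const]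
    simp [mulAvg]
  rw [hsub]
  have := norm_integral_le_of_norm_le_const (μ := ν) (ae_of_all _ hpt)
  simpa using this
end

section
/- Let G be a compact topological group with Haar probability measure ν, E a nontrivial real Banach space, and λ : G → L(E,E) a continuous nearly multiplicative pseudo-representation. Set b_0 := b(λ) and ε := 6·b_0²·c(λ), so that ε ≤ 2/3. Then the sequence of averaging iterates λ^(0) := λ, λ^(i+1) := (λ^(i))‾ is well defined (each λ^(i) is continuous, unital, and has all values invertible), and for every i ≥ 0 one has c(λ^(i)) ≤ ε^(2^i)/(6·b_0²) and b(λ^(i)) ≤ √3·b_0. -/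
open MeasureTheory

/-- `b(λ) := sup_{g} ‖λ(g)‖`. -/
noncomputable def bSup {G : Type*} [Group G] {E : Type*} [NormedAddCommGroup E]
    [NormedSpace ℝ E] (lam : G → E →L[ℝ] E) : ℝ :=
  ⨆ g : G, ‖lam g‖

/-- `c(λ) := sup_{g',g} ‖λ(g'g) − λ(g')∘λ(g)‖`, the multiplicativity defect. -/
noncomputable def cSup {G : Type*} [Group G] {E : Type*} [NormedAddCommGroup E]
    [NormedSpace ℝ E] (lam : G → E →L[ℝ] E) : ℝ :=
  ⨆ p : G × G, ‖lam (p.1 * p.2) - (lam p.1).comp (lam p.2)‖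

/-- The sequence of averaging iterates `λ⁽⁰⁾ := λ`, `λ⁽ⁱ⁺¹⁾ := (λ⁽ⁱ⁾)‾`. -/
noncomputable def iterAvg {G : Type*} [Group G] [TopologicalSpace G]
    [MeasurableSpace G] {E : Type*} [NormedAddCommGroup E] [NormedSpace ℝ E]
    (ν : Measure G) (lam : G → E →L[ℝ] E) : ℕ → G → E →L[ℝ] E
  | 0 => lam
  | (i + 1) => mulAvg ν (iterAvg ν lam i)


set_option synthInstance.maxHeartbeats 1000000
set_option maxHeartbeats 1000000
set_option linter.unusedSectionVars false

namespace SuperexpAux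

variable {G : Type*} [Group G] [TopologicalSpace G] [IsTopologicalGroup G]
    [CompactSpace G] [MeasurableSpace G] [BorelSpace G]
    {E : Type*} [NormedAddCommGroup E] [NormedSpace ℝ E] [CompleteSpace E]
    [Nontrivial E]

lemma norm_le_bSup {μ : G → E →L[ℝ] E} (hc : Continuous μ) (g : G) :
    ‖μ g‖ ≤ bSup μ :=
  le_ciSup (isCompact_range hc.norm).bddAbove g

lemma bSup_le {μ : G → E →L[ℝ] E} {C : ℝ} (h : ∀ g, ‖μ g‖ ≤ C) : bSup μ ≤ C :=
  ciSup_le h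

lemma bSup_nonneg {μ : G → E →L[ℝ] E} (hc : Continuous μ) : 0 ≤ bSup μ :=
  (norm_nonneg _).trans (norm_le_bSup hc 1)

lemma defect_le_cSup {μ : G → E →L[ℝ] E} (hc : Continuous μ) (g' g : G) :
    ‖μ (g' * g) - μ g' * μ g‖ ≤ cSup μ := by
  have hcont : Continuous fun p : G × G => ‖μ (p.1 * p.2) - (μ p.1).comp (μ p.2)‖ := by
    simp only [← ContinuousLinearMap.mul_def]
    exact ((hc.comp (continuous_fst.mul continuous_snd)).sub
      ((hc.comp continuous_fst).mul (hc.comp continuous_snd))).norm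
  have h := le_ciSup (f := fun p : G × G => ‖μ (p.1 * p.2) - (μ p.1).comp (μ p.2)‖)
      (isCompact_range hcont).bddAbove (g', g)
  simpa [cSup, ← ContinuousLinearMap.mul_def] using h

lemma cSup_le {μ : G → E →L[ℝ] E} {C : ℝ}
    (h : ∀ g' g, ‖μ (g' * g) - μ g' * μ g‖ ≤ C) : cSup μ ≤ C :=
  ciSup_le fun p => by
    rw [show (μ p.1).comp (μ p.2) = μ p.1 * μ p.2 from rfl]
    exact h p.1 p.2

lemma cSup_nonneg {μ : G → E →L[ℝ] E} (hc : Continuous μ) : 0 ≤ cSup μ :=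
  (norm_nonneg _).trans (defect_le_cSup hc 1 1)

lemma cont_integrable (ν : Measure G) [IsFiniteMeasure ν]
    {f : G → E →L[ℝ] E} (hf : Continuous f) : Integrable f ν := by
  refine ⟨?_, ?_⟩
  · have := hf.continuousOn.aestronglyMeasurable_of_isCompact (μ := ν)
      isCompact_univ MeasurableSet.univ
    rwa [Measure.restrict_univ] at this
  · obtain ⟨C, hC⟩ := (isCompact_range hf.norm).bddAbove
    exact HasFiniteIntegral.of_bounded (C := C) (ae_of_all _ fun x => hC (Set.mem_range_self x))

lemma norm_integral_le_const (ν : Measure G) [IsProbabilityMeasure ν]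
    {f : G → E →L[ℝ] E} {C : ℝ} (h : ∀ k, ‖f k‖ ≤ C) : ‖∫ k, f k ∂ν‖ ≤ C := by
  simpa using norm_integral_le_of_norm_le_const (μ := ν) (ae_of_all _ h)

/-- Invertibility of the values of a nearly multiplicative pseudo-representation. -/
lemma exists_unit {μ : G → E →L[ℝ] E} (hc : Continuous μ)
    (h1 : μ 1 = 1) {c : ℝ} (hcs : cSup μ ≤ c) (hc1 : c < 1) (g : G) :
    ∃ w : (E →L[ℝ] E)ˣ, μ g = ↑w ∧ ‖(↑w⁻¹ : E →L[ℝ] E)‖ ≤ bSup μ / (1 - c) := by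
  have hc0 : (0:ℝ) ≤ c := (cSup_nonneg hc).trans hcs
  set a := μ g with ha
  set b' := μ g⁻¹ with hb'
  have hab : ‖(1 : E →L[ℝ] E) - a * b'‖ ≤ c := by
    have h := defect_le_cSup hc g g⁻¹
    rw [mul_inv_cancel, h1] at h
    simpa [norm_sub_rev] using h.trans hcs
  have hba : ‖(1 : E →L[ℝ] E) - b' * a‖ ≤ c := by
    have h := defect_le_cSup hc g⁻¹ g
    rw [inv_mul_cancel, h1] at h
    simpa [norm_sub_rev] using h.trans hcs
  have h1' : ‖(1 : E →L[ℝ] E) - a * b'‖ < 1 := lt_of_le_of_lt hab hc1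
  have h2' : ‖(1 : E →L[ℝ] E) - b' * a‖ < 1 := lt_of_le_of_lt hba hc1
  set u₁ : (E →L[ℝ] E)ˣ := Units.oneSub _ h1' with hu₁def
  set u₂ : (E →L[ℝ] E)ˣ := Units.oneSub _ h2' with hu₂def
  have hu₁ : (u₁ : E →L[ℝ] E) = a * b' := by
    rw [hu₁def, Units.val_oneSub, sub_sub_cancel]
  have hu₂ : (u₂ : E →L[ℝ] E) = b' * a := by
    rw [hu₂def, Units.val_oneSub, sub_sub_cancel]
  set r : E →L[ℝ] E := b' * ↑u₁⁻¹ with hr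
  have har : a * r = 1 := by
    rw [hr, ← mul_assoc, ← hu₁, u₁.mul_inv]
  have hla : (↑u₂⁻¹ * b') * a = 1 := by
    rw [mul_assoc, ← hu₂, u₂.inv_mul]
  have hlr : (↑u₂⁻¹ * b' : E →L[ℝ] E) = r := by
    calc (↑u₂⁻¹ * b' : E →L[ℝ] E) = (↑u₂⁻¹ * b') * (a * r) := by rw [har, mul_one]
    _ = ((↑u₂⁻¹ * b') * a) * r := by noncomm_ring
    _ = r := by rw [hla, one_mul]
  refine ⟨⟨a, r, har, by rw [← hlr]; exact hla⟩, rfl, ?_⟩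
  show ‖r‖ ≤ _
  have hinv₁ : ‖(↑u₁⁻¹ : E →L[ℝ] E)‖ ≤ (1 - c)⁻¹ := by
    have hts : (↑u₁⁻¹ : E →L[ℝ] E) = ∑' n : ℕ, ((1 : E →L[ℝ] E) - a * b') ^ n := rfl
    rw [hts]
    have h := tsum_geometric_le_of_norm_lt_one _ h1'
    rw [norm_one] at h
    have h2 : (1 - ‖(1:E →L[ℝ] E) - a*b'‖)⁻¹ ≤ (1 - c)⁻¹ := by
      gcongr <;> linarith
    linarith
  calc ‖r‖ ≤ ‖b'‖ * ‖(↑u₁⁻¹ : E →L[ℝ] E)‖ := norm_mul_le _ _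
  _ ≤ bSup μ * (1 - c)⁻¹ :=
      mul_le_mul (norm_le_bSup hc g⁻¹) hinv₁ (norm_nonneg _) (bSup_nonneg hc)
  _ = bSup μ / (1 - c) := (div_eq_mul_inv _ _).symm

end SuperexpAux

namespace SuperexpAux

variable {G : Type*} [Group G] [TopologicalSpace G] [IsTopologicalGroup G]
    [CompactSpace G] [MeasurableSpace G] [BorelSpace G]
    {E : Type*} [NormedAddCommGroup E] [NormedSpace ℝ E] [CompleteSpace E]
    [Nontrivial E]

/-- The integrand of the multiplicative average, in ring language. -/
noncomputable def Fc (μ : G → E →L[ℝ] E) (g k : G) : E →L[ℝ] E :=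
  μ (g * k) * Ring.inverse (μ k)

lemma inv_cont {μ : G → E →L[ℝ] E} (hc : Continuous μ) (hu : ∀ g, IsUnit (μ g)) :
    Continuous fun k => Ring.inverse (μ k) := by
  rw [continuous_iff_continuousAt]
  intro k
  obtain ⟨w, hw⟩ := hu k
  exact (hw ▸ NormedRing.inverse_continuousAt w :
    ContinuousAt Ring.inverse (μ k)).comp hc.continuousAt

lemma Fc_cont2 {μ : G → E →L[ℝ] E} (hc : Continuous μ) (hu : ∀ g, IsUnit (μ g)) :
    Continuous fun p : G × G => Fc μ p.1 p.2 :=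
  (hc.comp (continuous_fst.mul continuous_snd)).mul
    ((inv_cont hc hu).comp continuous_snd)

lemma Fc_cont {μ : G → E →L[ℝ] E} (hc : Continuous μ) (hu : ∀ g, IsUnit (μ g)) (g : G) :
    Continuous (Fc μ g) :=
  (Fc_cont2 hc hu).comp (Continuous.prodMk_right g)

lemma Fc_mul {μ : G → E →L[ℝ] E} (hu : ∀ g, IsUnit (μ g)) (g' g k : G) :
    Fc μ g' (g * k) * Fc μ g k = Fc μ (g' * g) k := by
  unfold Fc
  rw [mul_assoc (μ (g' * (g * k))), ← mul_assoc (Ring.inverse (μ (g * k))),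
    Ring.inverse_mul_cancel _ (hu (g * k)), one_mul, ← mul_assoc g' g k]

lemma Fc_one {μ : G → E →L[ℝ] E} (hu : ∀ g, IsUnit (μ g)) (k : G) :
    Fc μ 1 k = 1 := by
  unfold Fc
  rw [one_mul]
  exact Ring.mul_inverse_cancel _ (hu k)

lemma Fc_dev {μ : G → E →L[ℝ] E} (hc : Continuous μ) {c β : ℝ}
    (hcs : cSup μ ≤ c) (hu : ∀ g, IsUnit (μ g))
    (hβ : ∀ g, ‖Ring.inverse (μ g)‖ ≤ β) (g k : G) :
    ‖Fc μ g k - μ g‖ ≤ c * β := by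
  have heq : Fc μ g k - μ g = (μ (g * k) - μ g * μ k) * Ring.inverse (μ k) := by
    rw [sub_mul, mul_assoc, Ring.mul_inverse_cancel _ (hu k), mul_one]
    rfl
  rw [heq]
  exact (norm_mul_le _ _).trans
    (mul_le_mul ((defect_le_cSup hc g k).trans hcs) (hβ k) (norm_nonneg _)
      ((cSup_nonneg hc).trans hcs))

lemma mulAvg_eq (ν : Measure G) (μ : G → E →L[ℝ] E) :
    mulAvg ν μ = fun g => ∫ k, Fc μ g k ∂ν := by
  funext g
  unfold mulAvg Fc
  congr 1
  funext k
  rw [ContinuousLinearMap.ringInverse_eq_inverse]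
  rfl

/-- All the properties of the multiplicative average needed for the induction. -/
lemma mulAvg_props (ν : Measure G) [ν.IsHaarMeasure] [IsProbabilityMeasure ν]
    {μ : G → E →L[ℝ] E} (hc : Continuous μ) (h1 : μ 1 = 1)
    {b c β : ℝ} (hb : bSup μ ≤ b) (hcs : cSup μ ≤ c) (hβ0 : 0 ≤ β)
    (hu : ∀ g, IsUnit (μ g)) (hβ : ∀ g, ‖Ring.inverse (μ g)‖ ≤ β) :
    Continuous (mulAvg ν μ) ∧ mulAvg ν μ 1 = 1 ∧
      bSup (mulAvg ν μ) ≤ b + c * β ∧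
      cSup (mulAvg ν μ) ≤ (c * β) * (2 * (c * β)) := by
  have hc0 : 0 ≤ c := (cSup_nonneg hc).trans hcs
  have hb0 : 0 ≤ b := (bSup_nonneg hc).trans hb
  have hm : ∀ h, mulAvg ν μ h = ∫ k, Fc μ h k ∂ν := fun h => congrFun (mulAvg_eq ν μ) h
  have hFg : ∀ g, Continuous (Fc μ g) := Fc_cont hc hu
  have hIg : ∀ g, Integrable (Fc μ g) ν := fun g => cont_integrable ν (hFg g)
  have hdev : ∀ g k, ‖Fc μ g k - μ g‖ ≤ c * β := Fc_dev hc hcs hu hβ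
  have hFnorm : ∀ g k, ‖Fc μ g k‖ ≤ b + c * β := by
    intro g k
    exact (norm_le_norm_add_norm_sub' (Fc μ g k) (μ g)).trans
      (add_le_add ((norm_le_bSup hc g).trans hb) (hdev g k))
  have hAvgDev : ∀ g, ‖μ g - mulAvg ν μ g‖ ≤ c * β := by
    intro g
    have heq : μ g - mulAvg ν μ g = ∫ k, (μ g - Fc μ g k) ∂ν := by
      rw [integral_sub (integrable_const _) (hIg g), integral_const, hm g]
      simp
    rw [heq]
    exact norm_integral_le_const ν fun k => by
      rw [norm_sub_rev]; exact hdev g k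
  refine ⟨?_, ?_, ?_, ?_⟩
  · -- continuity, via the curried continuous map `G → C(G, E →L[ℝ] E)`
    let H : C(G × G, E →L[ℝ] E) := ⟨fun p => Fc μ p.1 p.2, Fc_cont2 hc hu⟩
    have hI : LipschitzWith 1 (fun f : C(G, E →L[ℝ] E) => ∫ k, f k ∂ν) := by
      apply LipschitzWith.of_dist_le_mul
      intro f h
      rw [NNReal.coe_one, one_mul, dist_eq_norm,
        ← integral_sub (cont_integrable ν f.continuous) (cont_integrable ν h.continuous)]
      exact norm_integral_le_const ν fun k => by
        have := ContinuousMap.dist_apply_le_dist (f := f) (g := h) k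
        rwa [dist_eq_norm] at this
    have hcomp : mulAvg ν μ
        = (fun f : C(G, E →L[ℝ] E) => ∫ k, f k ∂ν) ∘ (ContinuousMap.curry H) := by
      funext g
      rw [hm g]
      rfl
    rw [hcomp]
    exact hI.continuous.comp (ContinuousMap.curry H).continuous
  · rw [hm 1]
    calc (∫ k, Fc μ 1 k ∂ν) = ∫ _, (1 : E →L[ℝ] E) ∂ν := by
          congr 1; funext k; exact Fc_one hu k
    _ = 1 := by simp
  · exact bSup_le fun g => by rw [hm g]; exact norm_integral_le_const ν (hFnorm g)
  · apply cSup_le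
    intro g' g
    have hIgk : Integrable (fun k => Fc μ g' (g * k)) ν :=
      cont_integrable ν ((hFg g').comp (continuous_const.mul continuous_id))
    have hIb : Integrable (fun k => Fc μ g' (g * k) * mulAvg ν μ g) ν :=
      cont_integrable ν
        (((hFg g').comp (continuous_const.mul continuous_id)).mul continuous_const)
    have hIc : Integrable (fun k => μ g' * Fc μ g k) ν :=
      cont_integrable ν (continuous_const.mul (hFg g))
    have key : (∫ k, (Fc μ g' (g * k) - μ g') * (Fc μ g k - mulAvg ν μ g) ∂ν)
        = mulAvg ν μ (g' * g) - mulAvg ν μ g' * mulAvg ν μ g := by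
      have hsub : ∀ k, (Fc μ g' (g * k) - μ g') * (Fc μ g k - mulAvg ν μ g)
          = Fc μ (g' * g) k - Fc μ g' (g * k) * mulAvg ν μ g
              - μ g' * Fc μ g k + μ g' * mulAvg ν μ g := by
        intro k
        rw [← Fc_mul hu g' g k]
        noncomm_ring
      have hIa : Integrable (fun k => Fc μ (g' * g) k) ν := hIg (g' * g)
      have hI1 : Integrable
          (fun k => Fc μ (g' * g) k - Fc μ g' (g * k) * mulAvg ν μ g) ν := hIa.sub hIb
      have hI2 : Integrable
          (fun k => Fc μ (g' * g) k - Fc μ g' (g * k) * mulAvg ν μ g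
            - μ g' * Fc μ g k) ν := hI1.sub hIc
      rw [integral_congr_ae (ae_of_all _ hsub),
        integral_add hI2 (integrable_const _),
        integral_sub hI1 hIc, integral_sub hIa hIb]
      have e1 : (∫ k, Fc μ g' (g * k) * mulAvg ν μ g ∂ν)
          = (∫ k, Fc μ g' (g * k) ∂ν) * mulAvg ν μ g := by
        have := ((ContinuousLinearMap.mul ℝ (E →L[ℝ] E)).flip
          (mulAvg ν μ g)).integral_comp_comm hIgk
        simpa using this
      have e2 : (∫ k, μ g' * Fc μ g k ∂ν) = μ g' * mulAvg ν μ g := by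
        have := ((ContinuousLinearMap.mul ℝ (E →L[ℝ] E)) (μ g')).integral_comp_comm (hIg g)
        simpa [hm g] using this
      have e3 : (∫ k, Fc μ g' (g * k) ∂ν) = mulAvg ν μ g' := by
        rw [integral_mul_left_eq_self (Fc μ g') g, hm g']
      rw [e1, e2, e3, integral_const, hm (g' * g)]
      simp
    rw [← key]
    apply norm_integral_le_const ν
    intro k
    calc ‖(Fc μ g' (g * k) - μ g') * (Fc μ g k - mulAvg ν μ g)‖
        ≤ ‖Fc μ g' (g * k) - μ g'‖ * ‖Fc μ g k - mulAvg ν μ g‖ := norm_mul_le _ _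
    _ ≤ (c * β) * (2 * (c * β)) := by
        apply mul_le_mul (hdev g' (g * k)) ?_ (norm_nonneg _) (mul_nonneg hc0 hβ0)
        have htri : ‖Fc μ g k - mulAvg ν μ g‖
            ≤ ‖Fc μ g k - μ g‖ + ‖μ g - mulAvg ν μ g‖ := by
          have habel : Fc μ g k - mulAvg ν μ g
              = (Fc μ g k - μ g) + (μ g - mulAvg ν μ g) := by abel
          calc ‖Fc μ g k - mulAvg ν μ g‖
              = ‖(Fc μ g k - μ g) + (μ g - mulAvg ν μ g)‖ := by rw [← habel]
          _ ≤ ‖Fc μ g k - μ g‖ + ‖μ g - mulAvg ν μ g‖ := norm_add_le _ _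
        have := hAvgDev g
        have := hdev g k
        linarith
  
end SuperexpAux

namespace SuperexpAux

lemma arith_main {b₀ t ε : ℝ} (hb₀ : 1 ≤ b₀) (ht0 : 0 ≤ t) (htε : t ≤ ε) (hε : ε ≤ 2/3) :
    t / (6 * b₀ ^ 2) ≤ 1 / 9 ∧
    (1 + ε) / (1 + t) * b₀ / (1 - t / (6 * b₀ ^ 2)) ≤ (1 + ε) / (1 + t ^ 2) * b₀ ∧
    2 * (t / (6 * b₀ ^ 2)) ^ 2
        * ((1 + ε) / (1 + t) * b₀ / (1 - t / (6 * b₀ ^ 2))) ^ 2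
      ≤ t ^ 2 / (6 * b₀ ^ 2) := by
  have hb₀0 : 0 < b₀ := by linarith
  have hB : 1 ≤ b₀ ^ 2 := by nlinarith
  have hB0 : 0 < 6 * b₀ ^ 2 := by nlinarith
  have ht23 : t ≤ 2 / 3 := htε.trans hε
  have hε0 : 0 ≤ ε := ht0.trans htε
  have hcle : t / (6 * b₀ ^ 2) ≤ t / 6 := by
    rw [div_le_div_iff₀ hB0 (by norm_num : (0:ℝ) < 6)]
    nlinarith
  have hc0 : 0 ≤ t / (6 * b₀ ^ 2) := div_nonneg ht0 hB0.le
  have hc19 : t / (6 * b₀ ^ 2) ≤ 1 / 9 := hcle.trans (by linarith)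
  have h1c : (0:ℝ) < 1 - t / (6 * b₀ ^ 2) := by linarith
  have h2main : (1 + ε) / (1 + t) * b₀ / (1 - t / (6 * b₀ ^ 2))
      ≤ (1 + ε) / (1 + t ^ 2) * b₀ := by
    rw [div_le_iff₀ h1c, div_mul_eq_mul_div, div_mul_eq_mul_div, div_mul_eq_mul_div,
      div_le_div_iff₀ (by linarith : (0:ℝ) < 1 + t) (by nlinarith : (0:ℝ) < 1 + t ^ 2)]
    have hkey : (1 + t ^ 2) ≤ (1 - t / 6) * (1 + t) := by nlinarith
    have h2 : 1 - t / 6 ≤ 1 - t / (6 * b₀ ^ 2) := by linarith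
    nlinarith [mul_nonneg (mul_nonneg (by linarith : (0:ℝ) ≤ 1 + ε) hb₀0.le) ht0,
      mul_nonneg (by linarith : (0:ℝ) ≤ 1 + ε) hb₀0.le]
  refine ⟨hc19, h2main, ?_⟩
  set X := (1 + ε) / (1 + t) * b₀ / (1 - t / (6 * b₀ ^ 2)) with hX
  have hX0 : 0 ≤ X := by
    apply div_nonneg _ h1c.le
    exact mul_nonneg (div_nonneg (by linarith) (by linarith)) hb₀0.le
  have hX53 : X ≤ 5 / 3 * b₀ := by
    refine h2main.trans ?_
    have h1 : (1 + ε) / (1 + t ^ 2) ≤ 1 + ε :=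
      div_le_self (by linarith) (by nlinarith)
    have : (1 + ε) / (1 + t ^ 2) ≤ 5 / 3 := h1.trans (by linarith)
    nlinarith
  have hmono : 2 * (t / (6 * b₀ ^ 2)) ^ 2 * X ^ 2
      ≤ 2 * (t / (6 * b₀ ^ 2)) ^ 2 * (5 / 3 * b₀) ^ 2 := by
    have hsq : X ^ 2 ≤ (5 / 3 * b₀) ^ 2 := by nlinarith
    nlinarith [sq_nonneg (t / (6 * b₀ ^ 2))]
  refine hmono.trans ?_
  have heq : 2 * (t / (6 * b₀ ^ 2)) ^ 2 * (5 / 3 * b₀) ^ 2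
      = 25 / 162 * (t ^ 2 / b₀ ^ 2) := by
    field_simp
    ring
  have heq2 : t ^ 2 / (6 * b₀ ^ 2) = 1 / 6 * (t ^ 2 / b₀ ^ 2) := by
    field_simp
  rw [heq, heq2]
  have : 0 ≤ t ^ 2 / b₀ ^ 2 := by positivity
  linarith

end SuperexpAux

namespace SuperexpAux

variable {G : Type*} [Group G] [TopologicalSpace G] [IsTopologicalGroup G]
    [CompactSpace G] [MeasurableSpace G] [BorelSpace G]
    {E : Type*} [NormedAddCommGroup E] [NormedSpace ℝ E] [CompleteSpace E]
    [Nontrivial E]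

lemma step (ν : Measure G) [ν.IsHaarMeasure] [IsProbabilityMeasure ν]
    {μ : G → E →L[ℝ] E} (hc : Continuous μ) (h1 : μ 1 = 1)
    {b c : ℝ} (hb : bSup μ ≤ b) (hcs : cSup μ ≤ c) (hc1 : c < 1) :
    (∀ g, ∃ w : (E →L[ℝ] E)ˣ, μ g = ↑w) ∧
    Continuous (mulAvg ν μ) ∧ mulAvg ν μ 1 = 1 ∧
    bSup (mulAvg ν μ) ≤ b / (1 - c) ∧
    cSup (mulAvg ν μ) ≤ 2 * c ^ 2 * (b / (1 - c)) ^ 2 := by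
  have hc0 : 0 ≤ c := (cSup_nonneg hc).trans hcs
  have hb0 : 0 ≤ b := (bSup_nonneg hc).trans hb
  have h1c : (0:ℝ) < 1 - c := by linarith
  have hw := fun g => exists_unit hc h1 hcs hc1 g
  have hu : ∀ g, IsUnit (μ g) := fun g => by
    obtain ⟨w, hwg, _⟩ := hw g
    exact hwg ▸ w.isUnit
  have hβ : ∀ g, ‖Ring.inverse (μ g)‖ ≤ b / (1 - c) := by
    intro g
    obtain ⟨w, hwg, hwn⟩ := hw g
    rw [hwg, Ring.inverse_unit]
    refine hwn.trans ?_
    rw [hwg] at *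
    gcongr
  have β0 : 0 ≤ b / (1 - c) := div_nonneg hb0 h1c.le
  obtain ⟨hcont', hone', hbS, hcS⟩ := mulAvg_props ν hc h1 hb hcs β0 hu hβ
  refine ⟨fun g => (hw g).imp (fun w h => h.1), hcont', hone', ?_, ?_⟩
  · refine hbS.trans ?_
    have heq : b + c * (b / (1 - c)) = b / (1 - c) := by
      field_simp
      ring
    linarith
  · exact hcS.trans_eq (by ring)

end SuperexpAux

/-- Superexponential decay of the multiplicativity defect along the averaging
iterates of a nearly multiplicative pseudo-representation: with `b₀ := b(λ)` and
`ε := 6·b₀²·c(λ)` one has `ε ≤ 2/3`, the iteration is well defined, and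
`c(λ⁽ⁱ⁾) ≤ ε^(2^i)/(6·b₀²)`, `b(λ⁽ⁱ⁾) ≤ √3·b₀` for every `i`. -/
theorem iterAvg_superexponential_decay
    {G : Type*} [Group G] [TopologicalSpace G] [IsTopologicalGroup G]
    [CompactSpace G] [MeasurableSpace G] [BorelSpace G]
    (ν : Measure G) [ν.IsHaarMeasure] [IsProbabilityMeasure ν]
    {E : Type*} [NormedAddCommGroup E] [NormedSpace ℝ E] [CompleteSpace E]
    [Nontrivial E]
    (lam : G → E →L[ℝ] E) (hcont : Continuous lam)
    (hunital : lam 1 = ContinuousLinearMap.id ℝ E)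
    (hnear : cSup lam ≤ (1 / 9) * (bSup lam ^ 2)⁻¹) :
    6 * bSup lam ^ 2 * cSup lam ≤ 2 / 3 ∧
    ∀ i : ℕ,
      Continuous (iterAvg ν lam i) ∧
      iterAvg ν lam i 1 = ContinuousLinearMap.id ℝ E ∧
      (∀ g : G, ∃ u : E ≃L[ℝ] E, iterAvg ν lam i g = u) ∧
      cSup (iterAvg ν lam i) ≤
        (6 * bSup lam ^ 2 * cSup lam) ^ (2 ^ i) / (6 * bSup lam ^ 2) ∧
      bSup (iterAvg ν lam i) ≤ Real.sqrt 3 * bSup lam := by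
  set b₀ := bSup lam with hb₀def
  set c₀ := cSup lam with hc₀def
  have hb₀1 : (1:ℝ) ≤ b₀ := by
    have h := SuperexpAux.norm_le_bSup hcont (1:G)
    rw [hunital, ContinuousLinearMap.norm_id] at h
    exact h
  have hb₀0 : (0:ℝ) < b₀ := by linarith
  have hB0 : (0:ℝ) < 6 * b₀ ^ 2 := by nlinarith
  have hc₀0 : 0 ≤ c₀ := SuperexpAux.cSup_nonneg hcont
  have hε23 : 6 * b₀ ^ 2 * c₀ ≤ 2/3 := by
    have hB : (0:ℝ) < b₀ ^ 2 := by nlinarith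
    calc 6 * b₀ ^ 2 * c₀ ≤ 6 * b₀ ^ 2 * (1/9 * (b₀ ^ 2)⁻¹) :=
          mul_le_mul_of_nonneg_left hnear (by positivity)
    _ = 2/3 := by field_simp; ring
  set ε := 6 * b₀ ^ 2 * c₀ with hεd
  have hε0 : 0 ≤ ε := mul_nonneg (by positivity) hc₀0
  refine ⟨hε23, ?_⟩
  have hone : lam 1 = 1 := by rw [hunital]; rfl
  have main : ∀ i, Continuous (iterAvg ν lam i) ∧ (iterAvg ν lam i) 1 = 1 ∧
      cSup (iterAvg ν lam i) ≤ ε ^ 2 ^ i / (6 * b₀ ^ 2) ∧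
      bSup (iterAvg ν lam i) ≤ (1 + ε) / (1 + ε ^ 2 ^ i) * b₀ := by
    intro i
    induction i with
    | zero =>
      refine ⟨hcont, hone, ?_, ?_⟩
      · have h1 : ε ^ 2 ^ 0 = ε := by norm_num
        rw [h1, hεd, mul_div_cancel_left₀ _ (ne_of_gt hB0)]
        exact le_rfl
      · have h1 : ε ^ 2 ^ 0 = ε := by norm_num
        rw [h1, div_self (by linarith : (1:ℝ) + ε ≠ 0), one_mul]
        exact le_rfl
    | succ i ih =>
      obtain ⟨hci, h1i, hcsi, hbsi⟩ := ih
      set t := ε ^ 2 ^ i with htd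
      have ht0 : 0 ≤ t := pow_nonneg hε0 _
      have htε : t ≤ ε := pow_le_of_le_one hε0 (by linarith) (Nat.two_pow_pos i).ne'
      obtain ⟨hc19, hb2, hc2⟩ := SuperexpAux.arith_main hb₀1 ht0 htε hε23
      obtain ⟨_, hcont', hone', hbS, hcS⟩ :=
        SuperexpAux.step ν hci h1i hbsi hcsi (lt_of_le_of_lt hc19 (by norm_num))
      have hiter : iterAvg ν lam (i+1) = mulAvg ν (iterAvg ν lam i) := rfl
      have hp : ε ^ 2 ^ (i+1) = t ^ 2 := by
        rw [htd, ← pow_mul, pow_succ]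
      refine ⟨by rw [hiter]; exact hcont', by rw [hiter]; exact hone', ?_, ?_⟩
      · rw [hiter, hp]
        exact hcS.trans hc2
      · rw [hiter, hp]
        exact hbS.trans hb2
  intro i
  obtain ⟨h1i, h2i, h3i, h4i⟩ := main i
  have ht0 : 0 ≤ ε ^ 2 ^ i := pow_nonneg hε0 _
  have htε : ε ^ 2 ^ i ≤ ε := pow_le_of_le_one hε0 (by linarith) (Nat.two_pow_pos i).ne'
  obtain ⟨hc19, _, _⟩ := SuperexpAux.arith_main hb₀1 ht0 htε hε23
  refine ⟨h1i, by rw [h2i, ContinuousLinearMap.one_def], ?_, h3i, ?_⟩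
  · intro g
    obtain ⟨w, hwg, _⟩ :=
      SuperexpAux.exists_unit h1i h2i h3i (lt_of_le_of_lt hc19 (by norm_num)) g
    exact ⟨ContinuousLinearEquiv.unitsEquiv ℝ E w, hwg⟩
  · refine h4i.trans ?_
    have hsq : Real.sqrt 3 ^ 2 = 3 := Real.sq_sqrt (by norm_num)
    have hs0 : 0 ≤ Real.sqrt 3 := Real.sqrt_nonneg 3
    have h53 : (5:ℝ)/3 ≤ Real.sqrt 3 := by nlinarith
    have h1t : (1:ℝ) ≤ 1 + ε ^ 2 ^ i := le_add_of_nonneg_right ht0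
    have hfrac : (1 + ε) / (1 + ε ^ 2 ^ i) ≤ 5/3 := by
      have hd := div_le_self (by linarith : (0:ℝ) ≤ 1 + ε) h1t
      linarith
    nlinarith
end

section
/- (Fast convergence theorem, one-object case.) Let G be a compact topological group with Haar probability measure ν, E a nontrivial real Banach space, and λ : G → L(E,E) a continuous nearly multiplicative pseudo-representation. Then the sequence of averaging iterates λ^(0) := λ, λ^(1) := λ̄, …, λ^(i+1) := (λ^(i))‾, … is well defined and converges uniformly on G to a continuous representation λ^(∞) of G on E, i.e. to a continuous map ρ : G → L(E,E) with ρ(1) = id and ρ(g'g) = ρ(g')∘ρ(g) for all g', g ∈ G. -/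
set_option synthInstance.maxHeartbeats 1000000
set_option maxHeartbeats 4000000
set_option linter.unusedSectionVars false
set_option linter.unusedVariables false


open MeasureTheory

namespace FastConvAux

open Topology Filter

variable {G : Type*} [Group G] [TopologicalSpace G] [IsTopologicalGroup G]
    [CompactSpace G] [MeasurableSpace G] [BorelSpace G]
    {E : Type*} [NormedAddCommGroup E] [NormedSpace ℝ E] [CompleteSpace E]

structure Good (μ : G → E →L[ℝ] E) (b c : ℝ) : Prop where
  cont : Continuous μ
  unital : μ 1 = 1
  hb : ∀ g, ‖μ g‖ ≤ b
  hc : ∀ g' g : G, ‖μ (g' * g) - μ g' * μ g‖ ≤ c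

variable {μ : G → E →L[ℝ] E} {b c : ℝ}

theorem Good.c_nonneg (h : Good μ b c) : 0 ≤ c := by
  have := h.hc 1 1
  simpa [h.unital] using this

theorem Good.isUnit (h : Good μ b c) (hc1 : c < 1) (g : G) : IsUnit (μ g) := by
  have hBA : ‖1 - μ g⁻¹ * μ g‖ < 1 := by
    have h2 := h.hc g⁻¹ g
    rw [inv_mul_cancel, h.unital] at h2
    exact lt_of_le_of_lt h2 hc1
  have hAB : ‖1 - μ g * μ g⁻¹‖ < 1 := by
    have h2 := h.hc g g⁻¹
    rw [mul_inv_cancel, h.unital] at h2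
    exact lt_of_le_of_lt h2 hc1
  have uBA : IsUnit (μ g⁻¹ * μ g) :=
    ⟨Units.oneSub _ hBA, sub_sub_cancel 1 _⟩
  have uAB : IsUnit (μ g * μ g⁻¹) :=
    ⟨Units.oneSub _ hAB, sub_sub_cancel 1 _⟩
  obtain ⟨u, hu⟩ := uAB
  obtain ⟨v, hv⟩ := uBA
  have hx : μ g * (μ g⁻¹ * ↑u⁻¹) = 1 := by
    rw [← mul_assoc, ← hu, Units.mul_inv]
  have hy : (↑v⁻¹ * μ g⁻¹) * μ g = 1 := by
    rw [mul_assoc, ← hv, Units.inv_mul]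
  have hxy : μ g⁻¹ * ↑u⁻¹ = ↑v⁻¹ * μ g⁻¹ := by
    calc μ g⁻¹ * ↑u⁻¹ = 1 * (μ g⁻¹ * ↑u⁻¹) := (one_mul _).symm
      _ = (↑v⁻¹ * μ g⁻¹) * (μ g * (μ g⁻¹ * ↑u⁻¹)) := by rw [← hy, mul_assoc]
      _ = ↑v⁻¹ * μ g⁻¹ := by rw [hx, mul_one]
  exact isUnit_iff_exists.mpr ⟨μ g⁻¹ * ↑u⁻¹, hx, by rw [hxy]; exact hy⟩

theorem Good.inv_norm_le (h : Good μ b c) (hb1 : 1 ≤ b) (hc9 : c ≤ 1/9) (g : G) :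
    ‖Ring.inverse (μ g)‖ ≤ 9/8 * b := by
  have hu := h.isUnit (lt_of_le_of_lt hc9 (by norm_num)) g
  have hAB : ‖1 - μ g * μ g⁻¹‖ ≤ c := by
    have h2 := h.hc g g⁻¹
    rwa [mul_inv_cancel, h.unital] at h2
  have key : Ring.inverse (μ g) = μ g⁻¹ + Ring.inverse (μ g) * (1 - μ g * μ g⁻¹) := by
    have h1 : Ring.inverse (μ g) * (μ g * μ g⁻¹) = μ g⁻¹ := by
      rw [← mul_assoc, Ring.inverse_mul_cancel _ hu, one_mul]
    rw [mul_sub, mul_one, h1]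
    abel
  have hn : ‖Ring.inverse (μ g)‖ ≤ ‖μ g⁻¹‖ + ‖Ring.inverse (μ g)‖ * ‖1 - μ g * μ g⁻¹‖ := by
    calc ‖Ring.inverse (μ g)‖ = ‖μ g⁻¹ + Ring.inverse (μ g) * (1 - μ g * μ g⁻¹)‖ := by rw [← key]
      _ ≤ ‖μ g⁻¹‖ + ‖Ring.inverse (μ g) * (1 - μ g * μ g⁻¹)‖ := norm_add_le _ _
      _ ≤ ‖μ g⁻¹‖ + ‖Ring.inverse (μ g)‖ * ‖1 - μ g * μ g⁻¹‖ := by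
          gcongr; exact norm_mul_le _ _
  have hIB := h.hb g⁻¹
  have hI0 := norm_nonneg (Ring.inverse (μ g))
  nlinarith [mul_le_mul_of_nonneg_left (hAB.trans hc9) hI0]


/-- The integrand of the multiplicative average, in ring form. -/
noncomputable def avgFn (μ : G → E →L[ℝ] E) : G → G → E →L[ℝ] E :=
  fun g k => μ (g * k) * Ring.inverse (μ k)

theorem mulAvg_eq (ν : Measure G) (μ : G → E →L[ℝ] E) :
    mulAvg ν μ = fun g => ∫ k, avgFn μ g k ∂ν := by
  funext g
  unfold mulAvg avgFn
  congr 1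
  funext k
  rw [← ContinuousLinearMap.mul_def,
    ← congrFun ContinuousLinearMap.ringInverse_eq_inverse (μ k)]

theorem Good.inv_cont (h : Good μ b c) (hc1 : c < 1) :
    Continuous (fun k => Ring.inverse (μ k)) := by
  rw [continuous_iff_continuousAt]
  intro k
  have h2 := NormedRing.inverse_continuousAt (h.isUnit hc1 k).unit
  rw [IsUnit.unit_spec] at h2
  exact h2.comp h.cont.continuousAt

theorem Good.avgFn_cont (h : Good μ b c) (hc1 : c < 1) :
    Continuous (fun p : G × G => avgFn μ p.1 p.2) := by
  unfold avgFn
  exact (h.cont.comp (continuous_fst.mul continuous_snd)).mul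
    ((h.inv_cont hc1).comp continuous_snd)

theorem Good.avgFn_sub_le (h : Good μ b c) (hb1 : 1 ≤ b) (hc9 : c ≤ 1/9) (g k : G) :
    ‖avgFn μ g k - μ g‖ ≤ 9/8 * b * c := by
  have hu := h.isUnit (lt_of_le_of_lt hc9 (by norm_num)) k
  have e : avgFn μ g k - μ g = (μ (g * k) - μ g * μ k) * Ring.inverse (μ k) := by
    rw [sub_mul]
    unfold avgFn
    congr 1
    rw [mul_assoc, Ring.mul_inverse_cancel _ hu, mul_one]
  rw [e]
  calc ‖(μ (g * k) - μ g * μ k) * Ring.inverse (μ k)‖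
      ≤ ‖μ (g * k) - μ g * μ k‖ * ‖Ring.inverse (μ k)‖ := norm_mul_le _ _
    _ ≤ c * (9/8 * b) :=
        mul_le_mul (h.hc g k) (h.inv_norm_le hb1 hc9 k) (norm_nonneg _) h.c_nonneg
    _ = 9/8 * b * c := by ring

theorem Good.avgFn_norm_le (h : Good μ b c) (hb1 : 1 ≤ b) (hc9 : c ≤ 1/9) (g k : G) :
    ‖avgFn μ g k‖ ≤ b * (9/8 * b) := by
  calc ‖avgFn μ g k‖ ≤ ‖μ (g * k)‖ * ‖Ring.inverse (μ k)‖ := norm_mul_le _ _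
    _ ≤ b * (9/8 * b) :=
        mul_le_mul (h.hb _) (h.inv_norm_le hb1 hc9 k) (norm_nonneg _)
          (le_trans zero_le_one hb1)


variable (ν : Measure G) [ν.IsHaarMeasure] [IsProbabilityMeasure ν]

theorem int_of_cont {f : G → E →L[ℝ] E} (hf : Continuous f) : Integrable f ν :=
  hf.integrable_of_hasCompactSupport (HasCompactSupport.of_compactSpace f)

theorem int_mul_right (f : G → E →L[ℝ] E) (A : E →L[ℝ] E) (hf : Integrable f ν) :
    ∫ k, f k * A ∂ν = (∫ k, f k ∂ν) * A := by
  simpa using ((ContinuousLinearMap.mul ℝ (E →L[ℝ] E)).flip A).integral_comp_comm hf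

theorem int_mul_left (f : G → E →L[ℝ] E) (A : E →L[ℝ] E) (hf : Integrable f ν) :
    ∫ k, A * f k ∂ν = A * (∫ k, f k ∂ν) := by
  simpa using (ContinuousLinearMap.mul ℝ (E →L[ℝ] E) A).integral_comp_comm hf

theorem Good.step (h : Good μ b c) (hb1 : 1 ≤ b) (hc9 : c ≤ 1/9) :
    Good (mulAvg ν μ) (b + 9/8 * b * c) ((9/4 * b * c)^2) ∧
    ∀ g, ‖mulAvg ν μ g - μ g‖ ≤ 9/8 * b * c := by
  have hc1 : c < 1 := lt_of_le_of_lt hc9 (by norm_num)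
  have hFc := h.avgFn_cont hc1
  have hcg : ∀ g, Continuous (fun k => avgFn μ g k) :=
    fun g => hFc.comp (continuous_const.prodMk continuous_id)
  have hck : ∀ k, Continuous (fun g => avgFn μ g k) :=
    fun k => hFc.comp (continuous_id.prodMk continuous_const)
  have hint : ∀ g, Integrable (fun k => avgFn μ g k) ν := fun g => int_of_cont ν (hcg g)
  have havg : ∀ g, mulAvg ν μ g = ∫ k, avgFn μ g k ∂ν := fun g => by rw [mulAvg_eq]
  have hclose : ∀ g, ‖mulAvg ν μ g - μ g‖ ≤ 9/8 * b * c := by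
    intro g
    have e : mulAvg ν μ g - μ g = ∫ k, (avgFn μ g k - μ g) ∂ν := by
      rw [integral_sub (hint g) (integrable_const _), integral_const, havg g]
      simp
    rw [e]
    have h2 := norm_integral_le_of_norm_le_const (μ := ν) (C := 9/8 * b * c)
      (Filter.Eventually.of_forall fun k => h.avgFn_sub_le hb1 hc9 g k)
    simpa using h2
  have hbavg : ∀ g, ‖mulAvg ν μ g‖ ≤ b + 9/8 * b * c := by
    intro g
    have h2 : ‖mulAvg ν μ g‖ ≤ ‖μ g‖ + ‖mulAvg ν μ g - μ g‖ := by
      have h3 := norm_add_le (μ g) (mulAvg ν μ g - μ g)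
      simpa using h3
    have h4 := hclose g
    have h5 := h.hb g
    linarith
  have hcont : Continuous (mulAvg ν μ) := by
    rw [mulAvg_eq]
    rw [continuous_iff_continuousAt]
    intro g₀
    rw [ContinuousAt, Metric.tendsto_nhds]
    intro ε hε
    obtain ⟨v, hv, hvp⟩ := IsCompact.mem_uniformity_of_prod
      (f := fun g k => avgFn μ g k) (s := (Set.univ : Set G)) (k := (Set.univ : Set G))
      (q := g₀) isCompact_univ (by exact hFc.continuousOn) (Set.mem_univ g₀)
      (Metric.dist_mem_uniformity (by linarith : (0:ℝ) < ε/2))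
    rw [nhdsWithin_univ] at hv
    filter_upwards [hv] with g hg'
    have hg : ∀ k : G, dist (avgFn μ g k) (avgFn μ g₀ k) < ε/2 :=
      fun k => hvp g hg' k (Set.mem_univ k)
    have e : (∫ k, avgFn μ g k ∂ν) - (∫ k, avgFn μ g₀ k ∂ν)
        = ∫ k, (avgFn μ g k - avgFn μ g₀ k) ∂ν :=
      (integral_sub (hint g) (hint g₀)).symm
    have h3 : ‖(∫ k, avgFn μ g k ∂ν) - (∫ k, avgFn μ g₀ k ∂ν)‖ ≤ ε/2 := by
      rw [e]
      have h4 := norm_integral_le_of_norm_le_const (μ := ν) (C := ε/2)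
        (Filter.Eventually.of_forall (fun k : G => by
          have h5 := hg k
          exact le_of_lt (by simpa [dist_eq_norm] using h5)))
      simpa using h4
    rw [dist_eq_norm]
    linarith
  have hunital : mulAvg ν μ 1 = 1 := by
    rw [havg]
    have e : ∀ k, avgFn μ 1 k = 1 := by
      intro k
      unfold avgFn
      rw [one_mul, Ring.mul_inverse_cancel _ (h.isUnit hc1 k)]
    simp only [e]
    simp
  have hdef : ∀ g' g : G,
      ‖mulAvg ν μ (g' * g) - mulAvg ν μ g' * mulAvg ν μ g‖ ≤ (9/4 * b * c)^2 := by
    intro g' g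
    set A' := mulAvg ν μ g' with hA'
    set A := mulAvg ν μ g with hA
    have hf1c : Continuous (fun k => avgFn μ g' (g * k)) :=
      (hcg g').comp (continuous_const.mul continuous_id)
    have hf1int : Integrable (fun k => avgFn μ g' (g * k)) ν := int_of_cont ν hf1c
    have hA'eq : A' = ∫ k, avgFn μ g' (g * k) ∂ν := by
      rw [hA', havg, integral_mul_left_eq_self (fun k => avgFn μ g' k) g]
    have hFmul : ∀ k, avgFn μ g' (g * k) * avgFn μ g k = avgFn μ (g' * g) k := by
      intro k
      unfold avgFn
      rw [mul_assoc (μ (g' * (g * k))), ← mul_assoc (Ring.inverse (μ (g * k))),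
        Ring.inverse_mul_cancel _ (h.isUnit hc1 (g * k)), one_mul, ← mul_assoc g' g k]
    have hexp : (fun k => (avgFn μ g' (g * k) - A') * (avgFn μ g k - A))
        = fun k => avgFn μ (g' * g) k - avgFn μ g' (g * k) * A - A' * avgFn μ g k + A' * A := by
      funext k
      rw [← hFmul k]
      noncomm_ring
    have hif1A : Integrable (fun k => avgFn μ g' (g * k) * A) ν :=
      int_of_cont ν (hf1c.mul continuous_const)
    have hiA'f2 : Integrable (fun k => A' * avgFn μ g k) ν :=
      int_of_cont ν (continuous_const.mul (hcg g))
    have hiFgg : Integrable (fun k => avgFn μ (g' * g) k) ν := hint (g' * g)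
    have hI1 : Integrable (fun k => avgFn μ (g' * g) k - avgFn μ g' (g * k) * A) ν :=
      hiFgg.sub hif1A
    have hI2 : Integrable
        (fun k => avgFn μ (g' * g) k - avgFn μ g' (g * k) * A - A' * avgFn μ g k) ν :=
      hI1.sub hiA'f2
    have hkey : ∫ k, (avgFn μ g' (g * k) - A') * (avgFn μ g k - A) ∂ν
        = mulAvg ν μ (g' * g) - A' * A := by
      rw [hexp]
      rw [integral_add hI2 (integrable_const _),
        integral_sub hI1 hiA'f2,
        integral_sub hiFgg hif1A,
        int_mul_right ν (fun k => avgFn μ g' (g * k)) A hf1int,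
        int_mul_left ν (fun k => avgFn μ g k) A' (hint g),
        integral_const, ← havg, ← hA'eq, ← havg]
      simp only [measureReal_def, measure_univ, ENNReal.toReal_one, one_smul]
      abel
    have hfac : (0:ℝ) ≤ 9/4 * b * c :=
      mul_nonneg (mul_nonneg (by norm_num) (le_trans zero_le_one hb1)) h.c_nonneg
    have hbd : ∀ k : G, ‖(avgFn μ g' (g * k) - A') * (avgFn μ g k - A)‖
        ≤ (9/4 * b * c)^2 := by
      intro k
      have h1 : ∀ g₀ k₀ : G, ‖avgFn μ g₀ k₀ - mulAvg ν μ g₀‖ ≤ 9/4 * b * c := by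
        intro g₀ k₀
        have e1 := h.avgFn_sub_le hb1 hc9 g₀ k₀
        have e2 := hclose g₀
        rw [norm_sub_rev] at e2
        calc ‖avgFn μ g₀ k₀ - mulAvg ν μ g₀‖
            ≤ ‖avgFn μ g₀ k₀ - μ g₀‖ + ‖μ g₀ - mulAvg ν μ g₀‖ := by
              have h3 := norm_add_le (avgFn μ g₀ k₀ - μ g₀) (μ g₀ - mulAvg ν μ g₀)
              simpa using h3
          _ ≤ 9/8 * b * c + 9/8 * b * c := add_le_add e1 e2
          _ = 9/4 * b * c := by ring
      calc ‖(avgFn μ g' (g * k) - A') * (avgFn μ g k - A)‖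
          ≤ ‖avgFn μ g' (g * k) - A'‖ * ‖avgFn μ g k - A‖ := norm_mul_le _ _
        _ ≤ (9/4 * b * c) * (9/4 * b * c) :=
            mul_le_mul (h1 g' (g * k)) (h1 g k) (norm_nonneg _) hfac
        _ = (9/4 * b * c)^2 := by ring
    rw [← hkey]
    have h2 := norm_integral_le_of_norm_le_const (μ := ν) (C := (9/4 * b * c)^2)
      (Filter.Eventually.of_forall hbd)
    simpa using h2
  exact ⟨⟨hcont, hunital, hbavg, hdef⟩, hclose⟩


noncomputable def BCseq (b0 c0 : ℝ) : ℕ → ℝ × ℝ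
  | 0 => (b0, c0)
  | i + 1 =>
    ((BCseq b0 c0 i).1 + 9/8 * (BCseq b0 c0 i).1 * (BCseq b0 c0 i).2,
     (9/4 * (BCseq b0 c0 i).1 * (BCseq b0 c0 i).2)^2)

theorem BCseq_facts {b0 c0 : ℝ} (hb0 : 1 ≤ b0) (hc0 : 0 ≤ c0) (hkey : c0 * b0^2 ≤ 1/9) :
    ∀ i, 1 ≤ (BCseq b0 c0 i).1 ∧ (BCseq b0 c0 i).1 ≤ b0 * (2 - (9/16)^i) ∧
      0 ≤ (BCseq b0 c0 i).2 ∧ (BCseq b0 c0 i).2 * (BCseq b0 c0 i).1^2 ≤ 1/9 ∧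
      (BCseq b0 c0 i).2 ≤ (9/16)^i * c0 := by
  intro i
  induction i with
  | zero =>
    simp only [BCseq, pow_zero]
    exact ⟨hb0, by nlinarith, hc0, hkey, by nlinarith⟩
  | succ i ih =>
    obtain ⟨h1, h2, h3, h4, h5⟩ := ih
    set b := (BCseq b0 c0 i).1 with hbdef
    set c := (BCseq b0 c0 i).2 with hcdef
    have hbpos : (0:ℝ) < b := lt_of_lt_of_le zero_lt_one h1
    have hb2 : b^2 ≥ 1 := by nlinarith
    have hc9 : c ≤ 1/9 := by nlinarith
    have hr0 : (0:ℝ) ≤ (9/16)^i := by positivity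
    have hr1 : ((9:ℝ)/16)^i ≤ 1 := pow_le_one₀ (by norm_num) (by norm_num)
    have hb0pos : (0:ℝ) < b0 := lt_of_lt_of_le zero_lt_one hb0
    have hb02 : (1:ℝ) ≤ b0^2 := by nlinarith
    have hc09 : c0 ≤ 1/9 := by nlinarith [mul_le_mul_of_nonneg_left hb02 hc0]
    have hble : b ≤ 2 * b0 := by nlinarith
    have hbc : b * c ≤ (2 * b0) * ((9/16)^i * c0) :=
      mul_le_mul hble h5 h3 (by linarith)
    have hbcr : b0 * ((9/16)^i * c0) ≤ b0 * ((9/16)^i * (1/9)) := by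
      apply mul_le_mul_of_nonneg_left _ hb0pos.le
      exact mul_le_mul_of_nonneg_left hc09 hr0
    have hgoal1 : 1 ≤ b + 9/8 * b * c := by nlinarith [mul_nonneg hbpos.le h3]
    have hgoal2 : b + 9/8 * b * c ≤ b0 * (2 - (9/16)^(i+1)) := by
      have hps : ((9:ℝ)/16)^(i+1) = (9/16)^i * (9/16) := pow_succ _ _
      rw [hps]
      nlinarith [hbc, hbcr]
    have hb' : b + 9/8 * b * c ≤ 9/8 * b := by
      nlinarith [mul_le_mul_of_nonneg_left hc9 hbpos.le]
    have hb'0 : (0:ℝ) ≤ b + 9/8 * b * c := by linarith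
    have hcb2 : (0:ℝ) ≤ c * b^2 := mul_nonneg h3 (sq_nonneg b)
    have hgoal4 : (9/4 * b * c)^2 * (b + 9/8 * b * c)^2 ≤ 1/9 := by
      calc (9/4 * b * c)^2 * (b + 9/8 * b * c)^2
          ≤ (9/4 * b * c)^2 * (9/8 * b)^2 :=
            mul_le_mul_of_nonneg_left (pow_le_pow_left₀ hb'0 hb' 2) (by positivity)
        _ = 6561/1024 * (c * b^2)^2 := by ring
        _ ≤ 6561/1024 * (1/9)^2 := by
            have := pow_le_pow_left₀ hcb2 h4 2
            nlinarith
        _ ≤ 1/9 := by norm_num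
    have hgoal5 : (9/4 * b * c)^2 ≤ (9/16)^(i+1) * c0 := by
      have e1 : (9/4 * b * c)^2 = 81/16 * (c * b^2) * c := by ring
      have e2 : 81/16 * (c * b^2) * c ≤ 81/16 * (1/9) * c := by
        nlinarith [mul_le_mul_of_nonneg_right h4 h3]
      have hps : ((9:ℝ)/16)^(i+1) = (9/16) * (9/16)^i := by rw [pow_succ]; ring
      rw [e1, hps]
      calc 81/16 * (c * b^2) * c ≤ 81/16 * (1/9) * c := e2
        _ = 9/16 * c := by ring
        _ ≤ 9/16 * ((9/16)^i * c0) := by nlinarith [h5]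
        _ = 9/16 * (9/16)^i * c0 := by ring
    exact ⟨hgoal1, hgoal2, sq_nonneg _, hgoal4, hgoal5⟩


theorem iter_good {lam : G → E →L[ℝ] E} {b0 c0 : ℝ} (h0 : Good lam b0 c0)
    (hb0 : 1 ≤ b0) (hc0 : 0 ≤ c0) (hkey : c0 * b0^2 ≤ 1/9) :
    ∀ i, Good (iterAvg ν lam i) (BCseq b0 c0 i).1 (BCseq b0 c0 i).2 := by
  intro i
  induction i with
  | zero => exact h0
  | succ i ih =>
    obtain ⟨h1, h2, h3, h4, h5⟩ := BCseq_facts hb0 hc0 hkey i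
    have hb2 : (1:ℝ) ≤ (BCseq b0 c0 i).1^2 := by nlinarith
    have hc9 : (BCseq b0 c0 i).2 ≤ 1/9 := by
      nlinarith [mul_le_mul_of_nonneg_left hb2 h3]
    exact (ih.step ν h1 hc9).1

theorem iter_close {lam : G → E →L[ℝ] E} {b0 c0 : ℝ} (h0 : Good lam b0 c0)
    (hb0 : 1 ≤ b0) (hc0 : 0 ≤ c0) (hkey : c0 * b0^2 ≤ 1/9) :
    ∀ i, ∀ g, ‖iterAvg ν lam (i+1) g - iterAvg ν lam i g‖
      ≤ 9/8 * (BCseq b0 c0 i).1 * (BCseq b0 c0 i).2 := by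
  intro i g
  obtain ⟨h1, h2, h3, h4, h5⟩ := BCseq_facts hb0 hc0 hkey i
  have hb2 : (1:ℝ) ≤ (BCseq b0 c0 i).1^2 := by nlinarith
  have hc9 : (BCseq b0 c0 i).2 ≤ 1/9 := by
    nlinarith [mul_le_mul_of_nonneg_left hb2 h3]
  exact ((iter_good ν h0 hb0 hc0 hkey i).step ν h1 hc9).2 g


theorem main
    {G : Type*} [Group G] [TopologicalSpace G] [IsTopologicalGroup G]
    [CompactSpace G] [MeasurableSpace G] [BorelSpace G]
    (ν : Measure G) [ν.IsHaarMeasure] [IsProbabilityMeasure ν]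
    {E : Type*} [NormedAddCommGroup E] [NormedSpace ℝ E] [CompleteSpace E]
    [Nontrivial E]
    (lam : G → E →L[ℝ] E) (hcont : Continuous lam)
    (hunital : lam 1 = ContinuousLinearMap.id ℝ E)
    (hnear : cSup lam ≤ (1 / 9) * (bSup lam ^ 2)⁻¹) :
    (∀ i : ℕ,
      Continuous (iterAvg ν lam i) ∧
      iterAvg ν lam i 1 = ContinuousLinearMap.id ℝ E ∧
      ∀ g : G, ∃ u : E ≃L[ℝ] E, iterAvg ν lam i g = u) ∧
    ∃ ρ : G → E →L[ℝ] E,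
      Continuous ρ ∧
      ρ 1 = ContinuousLinearMap.id ℝ E ∧
      (∀ g' g : G, ρ (g' * g) = (ρ g').comp (ρ g)) ∧
      TendstoUniformly (fun i => iterAvg ν lam i) ρ Filter.atTop := by
  set b0 : ℝ := bSup lam with hb0def
  set c0 : ℝ := (1/9) * (b0^2)⁻¹ with hc0def
  have hb : ∀ g, ‖lam g‖ ≤ b0 := by
    intro g
    exact le_ciSup (isCompact_range hcont.norm).bddAbove g
  have hb0 : 1 ≤ b0 := by
    have h1 : ‖lam 1‖ = 1 := by rw [hunital]; exact ContinuousLinearMap.norm_id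
    have := hb 1
    linarith
  have hb0pos : (0:ℝ) < b0 := lt_of_lt_of_le zero_lt_one hb0
  have hc : ∀ g' g : G, ‖lam (g' * g) - lam g' * lam g‖ ≤ c0 := by
    intro g' g
    have hf : Continuous (fun p : G × G => ‖lam (p.1 * p.2) - (lam p.1).comp (lam p.2)‖) :=
      ((hcont.comp continuous_mul).sub
        ((hcont.comp continuous_fst).mul (hcont.comp continuous_snd))).norm
    have h2 : ‖lam ((g', g).1 * (g', g).2) - (lam (g', g).1).comp (lam (g', g).2)‖
        ≤ cSup lam := le_ciSup (isCompact_range hf).bddAbove (g', g)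
    rw [ContinuousLinearMap.mul_def]
    exact le_trans h2 hnear
  have hc0 : (0:ℝ) ≤ c0 := by positivity
  have hkey : c0 * b0^2 ≤ 1/9 := by
    rw [hc0def, mul_assoc, inv_mul_cancel₀ (by positivity : b0^2 ≠ 0), mul_one]
  have hgood0 : Good lam b0 c0 :=
    ⟨hcont, by rw [hunital]; exact ContinuousLinearMap.one_def.symm, hb, hc⟩
  have hig := iter_good ν hgood0 hb0 hc0 hkey
  have hicl := iter_close ν hgood0 hb0 hc0 hkey
  have hfacts := BCseq_facts hb0 hc0 hkey
  -- geometric distance bound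
  set K : ℝ := 9/4 * b0 * c0 with hKdef
  have hK0 : 0 ≤ K := by positivity
  have hd : ∀ g : G, ∀ i, dist (iterAvg ν lam i g) (iterAvg ν lam (i+1) g)
      ≤ K * (9/16)^i := by
    intro g i
    obtain ⟨h1, h2, h3, h4, h5⟩ := hfacts i
    have hr0 : (0:ℝ) ≤ (9/16)^i := by positivity
    have hble : (BCseq b0 c0 i).1 ≤ 2 * b0 := by nlinarith
    have hbc : (BCseq b0 c0 i).1 * (BCseq b0 c0 i).2 ≤ (2 * b0) * ((9/16)^i * c0) :=
      mul_le_mul hble h5 h3 (by linarith)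
    have := hicl i g
    rw [dist_eq_norm, norm_sub_rev]
    calc ‖iterAvg ν lam (i+1) g - iterAvg ν lam i g‖
        ≤ 9/8 * (BCseq b0 c0 i).1 * (BCseq b0 c0 i).2 := this
      _ ≤ K * (9/16)^i := by rw [hKdef]; nlinarith
  have hcauchy : ∀ g : G, ∃ L, Tendsto (fun i => iterAvg ν lam i g) atTop (𝓝 L) :=
    fun g => cauchySeq_tendsto_of_complete
      (cauchySeq_of_le_geometric (9/16) K (by norm_num) (hd g))
  choose ρ hρ using hcauchy
  have hr9 : ((9:ℝ)/16) < 1 := by norm_num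
  have hdistlim : ∀ i, ∀ g : G, dist (iterAvg ν lam i g) (ρ g) ≤ K * (9/16)^i / (1 - 9/16) :=
    fun i g => dist_le_of_le_geometric_of_tendsto (9/16) K hr9 (hd g) (hρ g) i
  have hpow0 : Tendsto (fun i : ℕ => ((9:ℝ)/16)^i) atTop (𝓝 0) :=
    tendsto_pow_atTop_nhds_zero_of_lt_one (by norm_num) hr9
  have htu : TendstoUniformly (fun i => iterAvg ν lam i) ρ atTop := by
    rw [Metric.tendstoUniformly_iff]
    intro ε hε
    have hT : Tendsto (fun i : ℕ => K * (9/16)^i / (1 - 9/16)) atTop (𝓝 0) := by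
      have := (hpow0.const_mul K).div_const (1 - 9/16)
      simpa using this
    filter_upwards [hT.eventually (gt_mem_nhds hε)] with i hi g
    rw [dist_comm]
    exact lt_of_le_of_lt (hdistlim i g) hi
  constructor
  · intro i
    refine ⟨(hig i).cont, (hig i).unital.trans ContinuousLinearMap.one_def, ?_⟩
    intro g
    obtain ⟨h1, h2, h3, h4, h5⟩ := hfacts i
    have hb2' : (1:ℝ) ≤ (BCseq b0 c0 i).1^2 := by nlinarith
    have hc9 : (BCseq b0 c0 i).2 < 1 := by
      nlinarith [mul_le_mul_of_nonneg_left hb2' h3]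
    have hu := (hig i).isUnit hc9 g
    refine ⟨ContinuousLinearEquiv.unitsEquiv ℝ E hu.unit, ?_⟩
    ext x
    simp [ContinuousLinearEquiv.unitsEquiv_apply]
  · refine ⟨ρ, htu.continuous (Eventually.of_forall fun i => (hig i).cont).frequently, ?_, ?_, htu⟩
    · have he : (fun i => iterAvg ν lam i 1) = fun _ => (1 : E →L[ℝ] E) :=
        funext fun i => (hig i).unital
      have h2 : Tendsto (fun i => iterAvg ν lam i 1) atTop (𝓝 1) := by
        rw [he]; exact tendsto_const_nhds
      exact (tendsto_nhds_unique (hρ 1) h2).trans ContinuousLinearMap.one_def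
    · intro g' g
      have hsub : Tendsto
          (fun i => iterAvg ν lam i (g' * g) - iterAvg ν lam i g' * iterAvg ν lam i g)
          atTop (𝓝 (ρ (g' * g) - ρ g' * ρ g)) :=
        (hρ (g' * g)).sub ((hρ g').mul (hρ g))
      have hbound : ∀ i, ‖iterAvg ν lam i (g' * g) - iterAvg ν lam i g' * iterAvg ν lam i g‖
          ≤ (9/16)^i * c0 := fun i => le_trans ((hig i).hc g' g) (hfacts i).2.2.2.2
      have hlim0 : Tendsto (fun i : ℕ => ((9:ℝ)/16)^i * c0) atTop (𝓝 0) := by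
        have := hpow0.mul_const c0
        simpa using this
      have hle : ‖ρ (g' * g) - ρ g' * ρ g‖ ≤ 0 :=
        le_of_tendsto_of_tendsto' hsub.norm hlim0 hbound
      have heq : ρ (g' * g) - ρ g' * ρ g = 0 :=
        norm_eq_zero.mp (le_antisymm hle (norm_nonneg _))
      rw [← ContinuousLinearMap.mul_def]
      exact sub_eq_zero.mp heq

end FastConvAux

/-- Fast convergence theorem I of the paper, one-object case: the averaging
iterates of a continuous nearly multiplicative pseudo-representation are well
defined and converge uniformly to a continuous representation. -/
theorem fast_convergence_theorem
    {G : Type*} [Group G] [TopologicalSpace G] [IsTopologicalGroup G]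
    [CompactSpace G] [MeasurableSpace G] [BorelSpace G]
    (ν : Measure G) [ν.IsHaarMeasure] [IsProbabilityMeasure ν]
    {E : Type*} [NormedAddCommGroup E] [NormedSpace ℝ E] [CompleteSpace E]
    [Nontrivial E]
    (lam : G → E →L[ℝ] E) (hcont : Continuous lam)
    (hunital : lam 1 = ContinuousLinearMap.id ℝ E)
    (hnear : cSup lam ≤ (1 / 9) * (bSup lam ^ 2)⁻¹) :
    (∀ i : ℕ,
      Continuous (iterAvg ν lam i) ∧
      iterAvg ν lam i 1 = ContinuousLinearMap.id ℝ E ∧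
      ∀ g : G, ∃ u : E ≃L[ℝ] E, iterAvg ν lam i g = u) ∧
    ∃ ρ : G → E →L[ℝ] E,
      Continuous ρ ∧
      ρ 1 = ContinuousLinearMap.id ℝ E ∧
      (∀ g' g : G, ρ (g' * g) = (ρ g').comp (ρ g)) ∧
      TendstoUniformly (fun i => iterAvg ν lam i) ρ Filter.atTop := FastConvAux.main ν lam hcont hunital hnear
end
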